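/- arXiv:2302.10316 — 2 statements merged into one kernel-verified Lean document; each statement's English description precedes it below -/
import Mathlib

section
/- If E is a directed graph with finitely many vertices (E⁰ finite, though E may contain infinite emitters), then E has a composition series. -/
/-- A directed graph: vertices, edges, source and range maps. -/
structure DGraph where
  V : Type
  Ed : Type
  s : Ed → V
  r : Ed → V

namespace DGraph

variable (E : DGraph)

/-- One-step adjacency: there is an edge from `u` to `v`. -/
def Adj (u v : E.V) : Prop := ∃ e, E.s e = u ∧ E.r e = v

/-- `u ≥ v`: there is a (finite) path from `u` to `v`. -/
def Reaches (u v : E.V) : Prop := Relation.ReflTransGen E.Adj u v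

/-- The tree `T(W)` of a set of vertices. -/
def tree (W : Set E.V) : Set E.V := {u | ∃ v ∈ W, E.Reaches v u}

/-- The root `R(W)` of a set of vertices. -/
def root (W : Set E.V) : Set E.V := {u | ∃ v ∈ W, E.Reaches u v}

/-- The set of edges emitted by `v`. -/
def emits (v : E.V) : Set E.Ed := {e | E.s e = v}

/-- A sink emits no edges. -/
def IsSink (v : E.V) : Prop := E.emits v = ∅

/-- An infinite emitter emits infinitely many edges. -/
def IsInfEmitter (v : E.V) : Prop := (E.emits v).Infinite

/-- A regular vertex is neither a sink nor an infinite emitter. -/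
def IsRegular (v : E.V) : Prop := (E.emits v).Nonempty ∧ (E.emits v).Finite

/-- A hereditary set of vertices: `T(H) ⊆ H`. -/
def Hereditary (H : Set E.V) : Prop := ∀ u ∈ H, ∀ v, E.Reaches u v → v ∈ H

/-- A saturated set of vertices. -/
def Saturated (H : Set E.V) : Prop :=
  ∀ v, E.IsRegular v → (∀ e ∈ E.emits v, E.r e ∈ H) → v ∈ H

/-- The saturated closure of `W`: the smallest hereditary and saturated set containing `W`. -/
def satClosure (W : Set E.V) : Set E.V :=
  ⋂₀ {H : Set E.V | E.Hereditary H ∧ E.Saturated H ∧ W ⊆ H}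

/-- `es` is a finite walk (path) starting at `u`; `es = []` is the trivial path at `u`. -/
def IsWalkFrom (u : E.V) (es : List E.Ed) : Prop :=
  es.Chain' (fun e f => E.r e = E.s f) ∧ ∀ e ∈ es.head?, E.s e = u

/-- The terminal vertex (range) of the walk `es` starting at `u`. -/
def endVert (u : E.V) (es : List E.Ed) : E.V := es.getLast?.elim u E.r

/-- The set of vertices on the walk `es` starting at `u`. -/
def walkVerts (u : E.V) (es : List E.Ed) : Set E.V :=
  insert u {v | ∃ e ∈ es, E.r e = v}

/-- An infinite path. -/
def IsInfPath (f : ℕ → E.Ed) : Prop := ∀ n, E.r (f n) = E.s (f (n + 1))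

/-- The set of vertices on an infinite path. -/
def infVerts (f : ℕ → E.Ed) : Set E.V := Set.range fun n => E.s (f n)

/-- Elements of `E^{≤∞}`: finite walks or infinite paths. -/
inductive GPath (E : DGraph) : Type where
  | fin : E.V → List E.Ed → GPath E
  | inf : (ℕ → E.Ed) → GPath E

/-- Membership in `E^{≤∞}`: a well-formed finite path ending in a sink or an infinite
emitter, or an infinite path. -/
def gmem : GPath E → Prop
  | .fin u es => E.IsWalkFrom u es ∧
      (E.IsSink (E.endVert u es) ∨ E.IsInfEmitter (E.endVert u es))
  | .inf f => E.IsInfPath f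

/-- `p⁰`, the vertex set of an element of `E^{≤∞}`. -/
def gverts : GPath E → Set E.V
  | .fin u es => E.walkVerts u es
  | .inf f => E.infVerts f

/-- The graph `E` is cofinal. -/
def Cofinal : Prop :=
  ∀ v : E.V, ∀ p : GPath E, E.gmem p → ∃ w ∈ E.gverts p, E.Reaches v w

/-- `es` is a cycle based at `u`. -/
def IsCycle (u : E.V) (es : List E.Ed) : Prop :=
  es ≠ [] ∧ E.IsWalkFrom u es ∧ E.endVert u es = u ∧ (es.map E.s).Nodup

/-- The cycle `es` (based at `u`) has an exit. -/
def HasExit (u : E.V) (es : List E.Ed) : Prop :=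
  ∃ v ∈ E.walkVerts u es, ∃ e, E.s e = v ∧ e ∉ es

/-- An extreme cycle: a cycle with an exit such that `T(c⁰) ⊆ R(c⁰)`. -/
def IsExtremeCycle (u : E.V) (es : List E.Ed) : Prop :=
  E.IsCycle u es ∧ E.HasExit u es ∧
    E.tree (E.walkVerts u es) ⊆ E.root (E.walkVerts u es)

/-- `v` lies on some cycle. -/
def OnCycle (v : E.V) : Prop := ∃ u es, E.IsCycle u es ∧ v ∈ E.walkVerts u es

/-- A terminal (infinite) path. -/
def IsTerminalPath (f : ℕ → E.Ed) : Prop :=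
  E.IsInfPath f ∧
  (∀ v ∈ E.tree (E.infVerts f), ¬ E.IsInfEmitter v ∧ ¬ E.OnCycle v) ∧
  (∀ g : ℕ → E.Ed, E.IsInfPath g → E.s (g 0) ∈ E.infVerts f →
      E.tree (E.infVerts g) ⊆ E.root (E.infVerts g))

/-- A terminal vertex: a sink, a vertex on a cycle without exits, a vertex on an
extreme cycle, or a vertex on a terminal path. -/
def IsTerminalVert (v : E.V) : Prop :=
  E.IsSink v ∨
  (∃ u es, E.IsCycle u es ∧ ¬ E.HasExit u es ∧ v ∈ E.walkVerts u es) ∨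
  (∃ u es, E.IsExtremeCycle u es ∧ v ∈ E.walkVerts u es) ∨
  (∃ f, E.IsTerminalPath f ∧ v ∈ E.infVerts f)

/-- `p ∼ q` for elements of `E^{≤∞}`: `R(p⁰) = R(q⁰)`. -/
def pequiv (p q : GPath E) : Prop := E.root (E.gverts p) = E.root (E.gverts q)

/-- `v ≈ w` for terminal vertices. -/
def approx (v w : E.V) : Prop :=
  E.IsTerminalVert v ∧ E.IsTerminalVert w ∧
  ∃ p q : GPath E, E.gmem p ∧ E.gmem q ∧ v ∈ E.gverts p ∧ w ∈ E.gverts q ∧ E.pequiv p q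

/-- The cluster of a terminal vertex `v`: its `≈`-equivalence class. -/
def cluster (v : E.V) : Set E.V := {w | E.approx v w}

/-- `C` is a cluster of `E`. -/
def IsCluster (C : Set E.V) : Prop := ∃ v, E.IsTerminalVert v ∧ C = E.cluster v

/-- `Ter(E)`: the saturated closure of the set of terminal vertices. -/
def Ter : Set E.V := E.satClosure {v | E.IsTerminalVert v}

/-- The set `B_H` of breaking vertices of a (hereditary and saturated) set `H`. -/
def breaking (H : Set E.V) : Set E.V :=
  {v | v ∉ H ∧ E.IsInfEmitter v ∧
    {e | E.s e = v ∧ E.r e ∉ H}.Nonempty ∧ {e | E.s e = v ∧ E.r e ∉ H}.Finite}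

/-- `(H, S)` is an admissible pair. -/
def Admissible (H S : Set E.V) : Prop :=
  E.Hereditary H ∧ E.Saturated H ∧ S ⊆ E.breaking H

end DGraph
namespace DGraph

variable (E : DGraph)

/-- The set `B_H^G`. -/
def BHG (H G : Set E.V) : Set E.V :=
  {v | v ∉ H ∧ E.IsInfEmitter v ∧
    {e | E.s e = v ∧ E.r e ∈ G \ H}.Nonempty ∧ {e | E.s e = v ∧ E.r e ∈ G \ H}.Finite}

/-- The set `F₁(G−H, T−S)` of paths (recorded as nonempty edge lists). -/
def F1 (H S G T : Set E.V) : Set (List E.Ed) :=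
  {es | es ≠ [] ∧ es.Chain' (fun e f => E.r e = E.s f) ∧
    ∀ e ∈ es.getLast?, E.r e ∈ G \ H ∧ E.s e ∉ (G \ H) ∪ (T \ S)}

/-- The set `F₂(G−H, T−S)` of paths (recorded as nonempty edge lists). -/
def F2 (S T : Set E.V) : Set (List E.Ed) :=
  {es | es ≠ [] ∧ es.Chain' (fun e f => E.r e = E.s f) ∧
    ∀ e ∈ es.getLast?, E.r e ∈ T \ S}

/-- Raw vertices of the porcupine-quotient graph: old vertices `v`, vertices `w^p`,
and vertices `v'`. -/
inductive PQV (E : DGraph) : Type where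
  | old : E.V → PQV E
  | wp : List E.Ed → PQV E
  | pr : E.V → PQV E

/-- Raw edges of the porcupine-quotient graph: old edges `e`, edges `f^p`,
and edges `e'`. -/
inductive PQE (E : DGraph) : Type where
  | old : E.Ed → PQE E
  | fp : List E.Ed → PQE E
  | pr : E.Ed → PQE E

/-- Validity of a raw porcupine-quotient vertex. -/
def PQVok (H S G T : Set E.V) : PQV E → Prop
  | .old v => v ∈ (G \ H) ∪ (T \ S)
  | .wp es => es ∈ E.F1 H S G T ∪ E.F2 S T
  | .pr v => v ∈ ((G ∪ T) \ S) ∩ E.BHG H G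

/-- Validity of a raw porcupine-quotient edge. -/
def PQEok (H S G T : Set E.V) : PQE E → Prop
  | .old e => E.r e ∈ G \ H ∧ E.s e ∈ (G \ H) ∪ (T \ S)
  | .fp es => es ∈ E.F1 H S G T ∪ E.F2 S T
  | .pr e => E.r e ∈ ((G ∪ T) \ S) ∩ E.BHG H G

open Classical in
/-- The source of a raw porcupine-quotient edge. -/
noncomputable def PQsrc (H S G T : Set E.V) : PQE E → PQV E
  | .old e => .old (E.s e)
  | .fp es => .wp es
  | .pr e => if E.s e ∈ (G \ H) ∪ (T \ S) then .old (E.s e) else .wp [e]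

/-- The range of a raw porcupine-quotient edge. -/
def PQrng : PQE E → PQV E
  | .old e => .old (E.r e)
  | .fp [] => .wp []
  | .fp [e] => .old (E.r e)
  | .fp (_ :: f :: q) => .wp (f :: q)
  | .pr e => .pr (E.r e)

theorem PQsrc_ok {H S G T : Set E.V} {x : PQE E} (hx : E.PQEok H S G T x) :
    E.PQVok H S G T (E.PQsrc H S G T x) := by
  classical
  cases x with
  | old e => exact hx.2
  | fp es => exact hx
  | pr e =>
    obtain ⟨hGT, hB⟩ := hx
    show E.PQVok H S G T (if E.s e ∈ (G \ H) ∪ (T \ S) then .old (E.s e) else .wp [e])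
    by_cases h : E.s e ∈ (G \ H) ∪ (T \ S)
    · rw [if_pos h]; exact h
    · rw [if_neg h]
      by_cases hG : E.r e ∈ G
      · refine Or.inl ⟨by simp, List.isChain_singleton e, ?_⟩
        intro a ha
        simp only [List.getLast?_singleton, Option.mem_some_iff] at ha
        subst ha
        exact ⟨⟨hG, hB.1⟩, h⟩
      · refine Or.inr ⟨by simp, List.isChain_singleton e, ?_⟩
        intro a ha
        simp only [List.getLast?_singleton, Option.mem_some_iff] at ha
        subst ha
        exact ⟨hGT.1.resolve_left hG, hGT.2⟩

theorem PQrng_ok {H S G T : Set E.V} {x : PQE E} (hx : E.PQEok H S G T x) :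
    E.PQVok H S G T (E.PQrng x) := by
  cases x with
  | old e => exact Or.inl hx.1
  | pr e => exact hx
  | fp es =>
    cases es with
    | nil =>
      rcases hx with h1 | h2
      · exact absurd rfl h1.1
      · exact absurd rfl h2.1
    | cons e es' =>
      cases es' with
      | nil =>
        rcases hx with h1 | h2
        · have := h1.2.2 e (by simp [List.getLast?_singleton])
          exact Or.inl this.1
        · have := h2.2.2 e (by simp [List.getLast?_singleton])
          exact Or.inr this
      | cons f q =>
        show (f :: q) ∈ E.F1 H S G T ∪ E.F2 S T
        rcases hx with h1 | h2
        · refine Or.inl ⟨by simp, h1.2.1.tail, ?_⟩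
          intro a ha
          exact h1.2.2 a (by rw [List.getLast?_cons_cons]; exact ha)
        · refine Or.inr ⟨by simp, h2.2.1.tail, ?_⟩
          intro a ha
          exact h2.2.2 a (by rw [List.getLast?_cons_cons]; exact ha)

/-- The porcupine-quotient graph `(G,T)/(H,S)`. -/
noncomputable def PQ (H S G T : Set E.V) : DGraph where
  V := {x : PQV E // E.PQVok H S G T x}
  Ed := {x : PQE E // E.PQEok H S G T x}
  s := fun e => ⟨E.PQsrc H S G T e.1, E.PQsrc_ok e.2⟩
  r := fun e => ⟨E.PQrng e.1, E.PQrng_ok e.2⟩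

/-- The order on admissible pairs: `(H,S) ≤ (G,T)` iff `H ⊆ G` and `S ⊆ G ∪ T`. -/
def pairLE {α : Type} (p q : Set α × Set α) : Prop := p.1 ⊆ q.1 ∧ p.2 ⊆ q.1 ∪ q.2

/-- Strict order on admissible pairs. -/
def pairLT {α : Type} (p q : Set α × Set α) : Prop := pairLE p q ∧ p ≠ q

/-- `E` has a composition series: a finite chain of admissible pairs from `(∅,∅)`
to `(E⁰,∅)` whose consecutive porcupine-quotients are cofinal. -/
def HasCompSeries : Prop :=
  ∃ (n : ℕ) (c : ℕ → Set E.V × Set E.V),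
    c 0 = (∅, ∅) ∧ c n = (Set.univ, ∅) ∧
    (∀ i, i ≤ n → E.Admissible (c i).1 (c i).2) ∧
    (∀ i, i < n → pairLT (c i) (c (i + 1))) ∧
    (∀ i, i < n → (E.PQ (c i).1 (c i).2 (c (i + 1)).1 (c (i + 1)).2).Cofinal)

end DGraph

/-!
Grow the chain from `(∅, ∅)` by strictly enlarging the hereditary saturated set `H`; finiteness
of `E⁰` makes this terminate at `(E⁰, ∅)`. If `H ≠ E⁰`, choose a vertex outside `H` whose set `C`
of reachable vertices outside `H` is minimal: then `C` is strongly connected and its edges leave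
`C` only into `H`. Let `H'` be the saturation of `H ∪ C` and `S = H' ∩ B_H^{H'}`, and pass
`(H, ∅) < (H, S₁) < ⋯ < (H, S) < (H', ∅)`, adding the (finitely many) vertices of `S` one at a
time. In `(H, S ∪ {v})/(H, S)` every vertex is on a spine ending at the only sink `v`. In
`(H', ∅)/(H, S)` there are no primed vertices, since `S` absorbs them; every vertex reaches all
of `C` through old edges, and every sink, infinite emitter and infinite path is caught in `C`
because a vertex of `H' \ (H ∪ C)` is regular with an edge staying in `H' \ H`.
-/

namespace DGraph

variable {E : DGraph}

theorem admissible_empty : E.Admissible ∅ ∅ :=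
  ⟨fun _ hu => hu.elim, fun _ hreg hall => hreg.1.elim fun e he => hall e he,
    Set.empty_subset _⟩

theorem Hereditary.mem_of_adj {H : Set E.V} (hH : E.Hereditary H) {u v : E.V} (hu : u ∈ H)
    (h : E.Adj u v) : v ∈ H :=
  hH u hu v (.single h)

theorem Saturated.exists_edge_of_notMem {H : Set E.V} (hH : E.Saturated H) {u : E.V}
    (hu : E.IsRegular u) (huH : u ∉ H) : ∃ e ∈ E.emits u, E.r e ∉ H := by
  by_contra! h
  exact huH (hH u hu h)

theorem satClosure_hereditary (W : Set E.V) : E.Hereditary (E.satClosure W) :=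
  fun _ hu v huv K hK => hK.1 _ (hu K hK) v huv

theorem satClosure_saturated (W : Set E.V) : E.Saturated (E.satClosure W) :=
  fun v hreg hall K hK => hK.2.1 v hreg fun e he => hall e he K hK

theorem subset_satClosure (W : Set E.V) : W ⊆ E.satClosure W :=
  fun _ hw _ hK => hK.2.2 hw

def AdjIn (W : Set E.V) (a b : E.V) : Prop := E.Adj a b ∧ b ∈ W

theorem reflTransGen_adjIn_of_reaches {H G : Set E.V} (hH : E.Hereditary H)
    (hG : E.Hereditary G) {u w : E.V} (hu : u ∈ G) (h : E.Reaches u w) (hw : w ∉ H) :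
    Relation.ReflTransGen (E.AdjIn (G \ H)) u w := by
  induction h with
  | refl => exact .refl
  | tail hub hbc ih =>
    exact .tail (ih fun hb => hw (hH.mem_of_adj hb hbc)) ⟨hbc, hG _ hu _ (hub.tail hbc), hw⟩

variable (E) in
/-- Saturation from below: membership in `satClosure W` can then be argued by induction. -/
inductive SatGen (W : Set E.V) : E.V → Prop
  | base {v : E.V} : v ∈ W → SatGen W v
  | step {v : E.V} : E.IsRegular v → (∀ e ∈ E.emits v, SatGen W (E.r e)) → SatGen W v

theorem satClosure_subset_satGen {W : Set E.V} (hW : ∀ u ∈ W, ∀ v, E.Adj u v → v ∈ W) :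
    E.satClosure W ⊆ {v | E.SatGen W v} := by
  refine fun v hv => hv _ ⟨?_, fun _ hu hall => SatGen.step hu hall, fun _ hw => SatGen.base hw⟩
  intro u hu v huv
  induction huv with
  | refl => exact hu
  | tail _ hadj ih =>
    obtain ⟨e, rfl, rfl⟩ := hadj
    cases ih with
    | base h => exact .base (hW _ h _ ⟨e, rfl, rfl⟩)
    | step _ hall => exact hall e rfl

theorem SatGen.exists_reaches {H C : Set E.V} (hH : E.Saturated H) {u : E.V}
    (hu : E.SatGen (H ∪ C) u) (huH : u ∉ H) : ∃ c ∈ C, E.Reaches u c := by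
  induction hu with
  | base h => exact ⟨_, h.resolve_left huH, .refl⟩
  | step hreg _ ih =>
    obtain ⟨e, he, heH⟩ := hH.exists_edge_of_notMem hreg huH
    obtain ⟨c, hc, hrc⟩ := ih e he heH
    exact ⟨c, hc, .head ⟨e, he, rfl⟩ hrc⟩

theorem SatGen.exists_mem_of_isInfPath {W : Set E.V} {u : E.V} (hu : E.SatGen W u)
    {g : ℕ → E.Ed} (hg : E.IsInfPath g) (hg0 : E.s (g 0) = u) : ∃ n, E.s (g n) ∈ W := by
  induction hu generalizing g with
  | base h => exact ⟨0, hg0 ▸ h⟩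
  | step _ _ ih =>
    obtain ⟨n, hn⟩ := ih (g 0) hg0 (g := fun k => g (k + 1)) (fun k => hg (k + 1)) (hg 0).symm
    exact ⟨n + 1, hn⟩

theorem endVert_mem_walkVerts (u : E.V) (es : List E.Ed) :
    E.endVert u es ∈ E.walkVerts u es := by
  cases h : es.getLast? with
  | none => simp [endVert, walkVerts, h]
  | some l => exact Or.inr ⟨l, List.mem_of_getLast? h, by simp [endVert, h]⟩

theorem cofinal_of_forall_reaches (K : Set E.V) (hK : ∀ v, ∀ k ∈ K, E.Reaches v k)
    (hreg : ∀ v ∉ K, E.IsRegular v) (hinf : ∀ f, E.IsInfPath f → ∃ n, E.s (f n) ∈ K) :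
    E.Cofinal := by
  have hterm : ∀ v, E.IsSink v ∨ E.IsInfEmitter v → v ∈ K := by
    intro v hv
    by_contra hvK
    obtain ⟨hne, hfin⟩ := hreg v hvK
    exact hv.elim hne.ne_empty (· hfin)
  rintro v (⟨u, es⟩ | f) hp
  · exact ⟨_, E.endVert_mem_walkVerts u es, hK v _ (hterm _ hp.2)⟩
  · obtain ⟨n, hn⟩ := hinf f hp
    exact ⟨_, ⟨n, rfl⟩, hK v _ hn⟩

section Quotient

variable {H S G T : Set E.V}

theorem nil_notMem_F1_union_F2 : [] ∉ E.F1 H S G T ∪ E.F2 S T := by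
  rintro (⟨h, -⟩ | ⟨h, -⟩) <;> exact h rfl

theorem PQsrc_ne_pr (x : PQE E) (u : E.V) : E.PQsrc H S G T x ≠ .pr u := by
  cases x <;> simp [PQsrc, ite_eq_iff]

theorem exists_of_PQsrc_eq_old {x : PQE E} {u : E.V} (h : E.PQsrc H S G T x = .old u) :
    ∃ e, E.s e = u ∧ (x = .old e ∨ x = .pr e) := by
  cases x with
  | old e => exact ⟨e, by simpa [PQsrc] using h, .inl rfl⟩
  | fp es => simp [PQsrc] at h
  | pr e =>
    simp only [PQsrc] at h
    split_ifs at h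
    exact ⟨e, by simpa using h, .inr rfl⟩

theorem eq_fp_or_pr_of_PQsrc_eq_wp {x : PQE E} {es : List E.Ed} (h : E.PQsrc H S G T x = .wp es) :
    x = .fp es ∨ ∃ e, es = [e] ∧ x = .pr e := by
  cases x with
  | old e => simp [PQsrc] at h
  | fp es' => exact .inl (by simpa [PQsrc] using h)
  | pr e =>
    simp only [PQsrc] at h
    split_ifs at h
    exact .inr ⟨e, by simpa using h.symm, rfl⟩

end Quotient

namespace PQ

section General

variable {H S G T : Set E.V}

theorem emits_old_finite {u : E.V} (hu : u ∈ (G \ H) ∪ (T \ S)) (hfin : (E.emits u).Finite) :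
    ((E.PQ H S G T).emits ⟨.old u, hu⟩).Finite := by
  refine (((hfin.image PQE.old).union (hfin.image PQE.pr)).preimage
    Subtype.val_injective.injOn).subset ?_
  rintro ⟨x, hx⟩ hd
  obtain ⟨e, rfl, rfl | rfl⟩ := exists_of_PQsrc_eq_old (congrArg Subtype.val hd)
  · exact .inl ⟨e, rfl, rfl⟩
  · exact .inr ⟨e, rfl, rfl⟩

theorem isRegular_wp {es : List E.Ed} (h : E.PQVok H S G T (.wp es)) :
    (E.PQ H S G T).IsRegular ⟨.wp es, h⟩ := by
  have hsingle : {e : E.Ed | es = [e]}.Finite :=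
    Set.Subsingleton.finite fun a ha b hb => by simpa using ha.symm.trans hb
  refine ⟨⟨⟨.fp es, h⟩, rfl⟩, (((Set.finite_singleton (PQE.fp es)).union
    (hsingle.image PQE.pr)).preimage Subtype.val_injective.injOn).subset ?_⟩
  rintro ⟨x, hx⟩ hd
  rcases eq_fp_or_pr_of_PQsrc_eq_wp (congrArg Subtype.val hd) with rfl | ⟨e, rfl, rfl⟩
  · exact .inl rfl
  · exact .inr ⟨e, rfl, rfl⟩

theorem isRegular_old {u : E.V} (hu : u ∈ (G \ H) ∪ (T \ S)) (hreg : E.IsRegular u)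
    {e : E.Ed} (he : e ∈ E.emits u) (heG : E.r e ∈ G \ H) :
    (E.PQ H S G T).IsRegular ⟨.old u, hu⟩ :=
  ⟨⟨⟨.old e, heG, he ▸ hu⟩, Subtype.ext (congrArg PQV.old he)⟩, emits_old_finite hu hreg.2⟩

theorem exists_reaches_old_of_wp :
    ∀ (es : List E.Ed) (h : E.PQVok H S G T (.wp es)),
      ∃ u hu, (E.PQ H S G T).Reaches ⟨.wp es, h⟩ ⟨.old u, hu⟩
  | [], h => absurd h nil_notMem_F1_union_F2
  | [e], h => ⟨E.r e, E.PQrng_ok (x := .fp [e]) h, .single ⟨⟨.fp [e], h⟩, rfl, rfl⟩⟩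
  | e :: f :: q, h => by
    obtain ⟨u, hu, hr⟩ := exists_reaches_old_of_wp (f :: q) (E.PQrng_ok (x := .fp (e :: f :: q)) h)
    exact ⟨u, hu, .head ⟨⟨.fp _, h⟩, rfl, rfl⟩ hr⟩

theorem exists_reaches_old (hpr : ((G ∪ T) \ S) ∩ E.BHG H G = ∅) (x : (E.PQ H S G T).V) :
    ∃ u hu, (E.PQ H S G T).Reaches x ⟨.old u, hu⟩ := by
  obtain ⟨u | es | u, hx⟩ := x
  · exact ⟨u, hx, .refl⟩
  · exact exists_reaches_old_of_wp es hx
  · exact absurd hx (Set.eq_empty_iff_forall_notMem.1 hpr u)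

theorem reaches_old_of_reflTransGen {a b : E.V}
    (h : Relation.ReflTransGen (E.AdjIn (G \ H)) a b) (ha : a ∈ (G \ H) ∪ (T \ S))
    (hb : b ∈ (G \ H) ∪ (T \ S)) :
    (E.PQ H S G T).Reaches ⟨.old a, ha⟩ ⟨.old b, hb⟩ := by
  induction h using Relation.ReflTransGen.head_induction_on with
  | refl => exact .refl
  | head hac _ ih =>
    obtain ⟨⟨e, rfl, rfl⟩, he⟩ := hac
    exact .head ⟨⟨.old e, he, ha⟩, rfl, rfl⟩ (ih (.inl he))

section InfPath

variable {f : ℕ → (E.PQ H S G T).Ed}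

theorem PQsrc_succ_of_isInfPath (hf : (E.PQ H S G T).IsInfPath f) (n : ℕ) :
    E.PQsrc H S G T (f (n + 1)).1 = E.PQrng (f n).1 :=
  (congrArg Subtype.val (hf n)).symm

-- A primed vertex emits nothing, so an infinite path cannot pass through a primed edge.
theorem ne_pr_of_isInfPath (hf : (E.PQ H S G T).IsInfPath f) (n : ℕ) (e : E.Ed) :
    (f n).1 ≠ .pr e := by
  intro h
  have hsrc := PQsrc_succ_of_isInfPath hf n
  rw [h] at hsrc
  exact PQsrc_ne_pr _ _ hsrc

theorem exists_old_of_isInfPath (hf : (E.PQ H S G T).IsInfPath f) :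
    ∃ n e, (f n).1 = .old e := by
  have hfp : ∀ es n, (f n).1 = .fp es → ∃ m e, (f m).1 = .old e := by
    intro es
    induction es with
    | nil =>
      intro n h
      exact absurd (h ▸ (f n).2) nil_notMem_F1_union_F2
    | cons e rest ih =>
      intro n h
      have hsrc := PQsrc_succ_of_isInfPath hf n
      rw [h] at hsrc
      rcases rest with _ | ⟨g, q⟩
      · obtain ⟨e', -, h' | h'⟩ := exists_of_PQsrc_eq_old hsrc
        · exact ⟨n + 1, e', h'⟩
        · exact absurd h' (ne_pr_of_isInfPath hf _ _)
      · rcases eq_fp_or_pr_of_PQsrc_eq_wp hsrc with h' | ⟨e', -, h'⟩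
        · exact ih (n + 1) h'
        · exact absurd h' (ne_pr_of_isInfPath hf _ _)
  rcases h0 : (f 0).1 with e | es | e
  · exact ⟨0, e, h0⟩
  · exact hfp es 0 h0
  · exact absurd h0 (ne_pr_of_isInfPath hf 0 e)

theorem exists_old_tail_of_isInfPath (hf : (E.PQ H S G T).IsInfPath f) :
    ∃ m, ∃ g : ℕ → E.Ed, E.IsInfPath g ∧ ∀ k, (f (m + k)).1 = .old (g k) := by
  have hnext : ∀ n e, (f n).1 = .old e → ∃ e', (f (n + 1)).1 = .old e' ∧ E.s e' = E.r e := by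
    intro n e h
    have hsrc := PQsrc_succ_of_isInfPath hf n
    rw [h] at hsrc
    obtain ⟨e', he', h' | h'⟩ := exists_of_PQsrc_eq_old hsrc
    · exact ⟨e', h', he'⟩
    · exact absurd h' (ne_pr_of_isInfPath hf _ _)
  obtain ⟨m, e₀, hm⟩ := exists_old_of_isInfPath hf
  have hold : ∀ k, ∃ e, (f (m + k)).1 = .old e := by
    intro k
    induction k with
    | zero => exact ⟨e₀, hm⟩
    | succ k ih =>
      obtain ⟨e, he⟩ := ih
      obtain ⟨e', he', -⟩ := hnext _ e he
      exact ⟨e', he'⟩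
  choose g hg using hold
  refine ⟨m, g, fun k => ?_, hg⟩
  obtain ⟨e', he', hse⟩ := hnext _ _ (hg k)
  obtain rfl : e' = g (k + 1) := PQE.old.inj (he'.symm.trans (hg (k + 1)))
  exact hse.symm

end InfPath

end General

theorem cofinal_insert (H S : Set E.V) {v : E.V} (hv : v ∉ S) :
    (E.PQ H S H (insert v S)).Cofinal := by
  have hold : ∀ {u}, u ∈ (H \ H) ∪ (insert v S \ S) → u = v := by
    rintro u (hu | ⟨hu, huS⟩)
    · exact absurd hu.1 hu.2
    · exact hu.resolve_right huS
  have hpr : ((H ∪ insert v S) \ S) ∩ E.BHG H H = ∅ :=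
    Set.eq_empty_of_forall_notMem fun _ ⟨_, _, _, ⟨_, _, he⟩, _⟩ => he.2 he.1
  let ov : (E.PQ H S H (insert v S)).V := ⟨.old v, .inr ⟨Set.mem_insert v S, hv⟩⟩
  have hreach : ∀ x, (E.PQ H S H (insert v S)).Reaches x ov := by
    intro x
    obtain ⟨u, hu, hx⟩ := exists_reaches_old hpr x
    obtain rfl := hold hu
    exact hx
  refine cofinal_of_forall_reaches {ov} (fun x _ hk => hk ▸ hreach x) ?_ ?_
  · rintro ⟨u | es | u, hx⟩ hne
    · exact absurd (Subtype.ext (congrArg PQV.old (hold hx))) hne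
    · exact isRegular_wp hx
    · exact absurd hx (Set.eq_empty_iff_forall_notMem.1 hpr u)
  · intro f hf
    obtain ⟨m, g, -, hg⟩ := exists_old_tail_of_isInfPath hf
    have hedge := (f (m + 0)).2
    rw [hg 0] at hedge
    exact absurd hedge.1.1 hedge.1.2

theorem cofinal_satClosure {H C : Set E.V} (hH : E.Hereditary H) (hHs : E.Saturated H)
    (hCH : Disjoint C H) (hCadj : ∀ c ∈ C, ∀ x, E.Adj c x → x ∈ H ∪ C)
    (hCconn : ∀ c ∈ C, ∀ c' ∈ C, E.Reaches c c') :
    (E.PQ H (E.satClosure (H ∪ C) ∩ E.BHG H (E.satClosure (H ∪ C)))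
      (E.satClosure (H ∪ C)) ∅).Cofinal := by
  set H' := E.satClosure (H ∪ C)
  set S := H' ∩ E.BHG H H'
  have hH' : E.Hereditary H' := E.satClosure_hereditary _
  have hgen : ∀ u ∈ H', E.SatGen (H ∪ C) u := by
    refine E.satClosure_subset_satGen ?_
    rintro u (hu | hu) v huv
    exacts [.inl (hH.mem_of_adj hu huv), hCadj u hu v huv]
  have hold : ∀ {u}, u ∈ (H' \ H) ∪ (∅ \ S) → u ∈ H' \ H := by simp
  have hpr : ((H' ∪ ∅) \ S) ∩ E.BHG H H' = ∅ := by
    ext u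
    simp only [S, Set.union_empty, Set.mem_inter_iff, Set.mem_sdiff]
    tauto
  refine cofinal_of_forall_reaches {x | ∃ c ∈ C, x.1 = .old c} ?_ ?_ ?_
  · rintro x ⟨k, hk⟩ ⟨c, hc, rfl : k = .old c⟩
    obtain ⟨u, hu, hxu⟩ := exists_reaches_old hpr x
    obtain ⟨huH', huH⟩ := hold hu
    obtain ⟨c₀, hc₀, huc₀⟩ := (hgen u huH').exists_reaches hHs huH
    have hpath := reflTransGen_adjIn_of_reaches hH hH' huH' (huc₀.trans (hCconn c₀ hc₀ c hc))
      (Set.disjoint_left.1 hCH hc)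
    exact hxu.trans (reaches_old_of_reflTransGen hpath hu hk)
  · rintro ⟨u | es | u, hx⟩ hxK
    · obtain ⟨huH', huH⟩ := hold hx
      cases hgen u huH' with
      | base h => exact absurd ⟨u, h.resolve_left huH, rfl⟩ hxK
      | step hreg _ =>
        obtain ⟨e, he, heH⟩ := hHs.exists_edge_of_notMem hreg huH
        exact isRegular_old hx hreg he ⟨hH'.mem_of_adj huH' ⟨e, he, rfl⟩, heH⟩
    · exact isRegular_wp hx
    · exact absurd hx (Set.eq_empty_iff_forall_notMem.1 hpr u)
  · intro f hf
    obtain ⟨m, g, hg, hfg⟩ := exists_old_tail_of_isInfPath hf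
    have hW : ∀ k, E.s (g k) ∈ H' \ H := by
      intro k
      have hedge := (f (m + k)).2
      rw [hfg k] at hedge
      exact hold hedge.2
    obtain ⟨n, hn⟩ := (hgen _ (hW 0).1).exists_mem_of_isInfPath hg rfl
    refine ⟨m + n, E.s (g n), hn.resolve_left (hW n).2, ?_⟩
    change E.PQsrc H S H' ∅ (f (m + n)).1 = _
    rw [hfg n]
    rfl

end PQ

variable (E) in
def CofinalStep (P Q : Set E.V × Set E.V) : Prop :=
  E.Admissible Q.1 Q.2 ∧ pairLT P Q ∧ (E.PQ P.1 P.2 Q.1 Q.2).Cofinal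

theorem exists_chain_of_reflTransGen {P Q : Set E.V × Set E.V} (hP : E.Admissible P.1 P.2)
    (h : Relation.ReflTransGen E.CofinalStep P Q) :
    ∃ (n : ℕ) (c : ℕ → Set E.V × Set E.V),
      c 0 = P ∧ c n = Q ∧
      (∀ i, i ≤ n → E.Admissible (c i).1 (c i).2) ∧
      (∀ i, i < n → pairLT (c i) (c (i + 1))) ∧
      (∀ i, i < n → (E.PQ (c i).1 (c i).2 (c (i + 1)).1 (c (i + 1)).2).Cofinal) := by
  induction h with
  | refl => exact ⟨0, fun _ => P, rfl, rfl, fun _ _ => hP, nofun, nofun⟩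
  | @tail Q R _ hQR ih =>
    obtain ⟨n, c, hc0, hcn, hadm, hlt, hcof⟩ := ih
    obtain ⟨hRadm, hQRlt, hQRcof⟩ := hQR
    refine ⟨n + 1, fun i => if i ≤ n then c i else R, by simp [hc0], by simp, ?_, ?_, ?_⟩
    · intro i hi
      dsimp only
      split_ifs with h
      exacts [hadm i h, hRadm]
    · intro i hi
      rcases Nat.lt_succ_iff_lt_or_eq.1 hi with hi | rfl
      · simpa [hi.le, Nat.succ_le_of_lt hi] using hlt i hi
      · simpa [hcn] using hQRlt
    · intro i hi
      rcases Nat.lt_succ_iff_lt_or_eq.1 hi with hi | rfl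
      · simpa [hi.le, Nat.succ_le_of_lt hi] using hcof i hi
      · simpa [hcn] using hQRcof

theorem reflTransGen_cofinalStep_of_subset_breaking {H S : Set E.V} (hH : E.Hereditary H)
    (hHs : E.Saturated H) (hfin : S.Finite) (hS : S ⊆ E.breaking H) :
    Relation.ReflTransGen E.CofinalStep (H, ∅) (H, S) := by
  induction S, hfin using Set.Finite.induction_on with
  | empty => exact .refl
  | @insert v S hv _ ih =>
    refine .tail (ih ((Set.subset_insert v S).trans hS)) ⟨⟨hH, hHs, hS⟩, ⟨?_, ?_⟩, ?_⟩
    · exact ⟨subset_rfl, fun x hx => .inr (Set.mem_insert_of_mem v hx)⟩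
    · exact fun h => hv ((Prod.mk.inj h).2 ▸ Set.mem_insert v S)
    · exact PQ.cofinal_insert H S hv

theorem inter_BHG_subset_breaking {H G : Set E.V} (hG : E.Hereditary G) :
    G ∩ E.BHG H G ⊆ E.breaking H := by
  rintro v ⟨hvG, hvH, hinf, hne, hfin⟩
  have hedges : {e | E.s e = v ∧ E.r e ∉ H} = {e | E.s e = v ∧ E.r e ∈ G \ H} := by
    ext e
    exact ⟨fun ⟨h1, h2⟩ => ⟨h1, hG.mem_of_adj hvG ⟨e, h1, rfl⟩, h2⟩, fun ⟨h1, h2⟩ => ⟨h1, h2.2⟩⟩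
  exact ⟨hvH, hinf, hedges ▸ hne, hedges ▸ hfin⟩

theorem exists_closed_stronglyConnected [Finite E.V] {H : Set E.V} (hH : H ≠ Set.univ) :
    ∃ C : Set E.V, C.Nonempty ∧ Disjoint C H ∧ (∀ c ∈ C, ∀ x, E.Adj c x → x ∈ H ∪ C) ∧
      ∀ c ∈ C, ∀ c' ∈ C, E.Reaches c c' := by
  let D : E.V → Set E.V := fun u => {w | E.Reaches u w ∧ w ∉ H}
  obtain ⟨v₀, hv₀, hmin⟩ :=
    exists_minimalFor_of_wellFoundedLT (· ∉ H) D ((Set.ne_univ_iff_exists_notMem H).1 hH)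
  refine ⟨D v₀, ⟨v₀, .refl, hv₀⟩, Set.disjoint_left.2 fun _ hc => hc.2, ?_, ?_⟩
  · intro c hc x hcx
    by_cases hx : x ∈ H
    exacts [.inl hx, .inr ⟨hc.1.tail hcx, hx⟩]
  · intro c hc c' hc'
    have hv₀c : v₀ ∈ D c := hmin hc.2 (fun w hw => ⟨hc.1.trans hw.1, hw.2⟩) ⟨.refl, hv₀⟩
    exact hv₀c.1.trans hc'.1

theorem exists_gt_reflTransGen_cofinalStep [Finite E.V] {H : Set E.V} (hH : E.Hereditary H)
    (hHs : E.Saturated H) (hne : H ≠ Set.univ) :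
    ∃ H' > H, E.Hereditary H' ∧ E.Saturated H' ∧
      Relation.ReflTransGen E.CofinalStep (H, ∅) (H', ∅) := by
  obtain ⟨C, ⟨c, hc⟩, hCH, hCadj, hCconn⟩ := E.exists_closed_stronglyConnected hne
  set H' := E.satClosure (H ∪ C)
  have hH' : E.Hereditary H' := E.satClosure_hereditary _
  have hHH' : H ⊆ H' := fun _ hv => E.subset_satClosure _ (.inl hv)
  have hcH' : c ∈ H' := E.subset_satClosure _ (.inr hc)
  have hcH : c ∉ H := Set.disjoint_left.1 hCH hc
  have hSbr := inter_BHG_subset_breaking (H := H) hH'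
  refine ⟨H', (Set.ssubset_iff_of_subset hHH').2 ⟨c, hcH', hcH⟩, hH', E.satClosure_saturated _, ?_⟩
  refine (reflTransGen_cofinalStep_of_subset_breaking hH hHs (Set.toFinite _) hSbr).tail
    ⟨⟨hH', E.satClosure_saturated _, Set.empty_subset _⟩, ⟨⟨hHH', fun _ hv => .inl hv.1⟩, ?_⟩,
      PQ.cofinal_satClosure hH hHs hCH hCadj hCconn⟩
  exact fun h => hcH ((Prod.mk.inj h).1 ▸ hcH')

theorem reflTransGen_cofinalStep_univ [Finite E.V] :
    Relation.ReflTransGen E.CofinalStep (∅, ∅) (Set.univ, ∅) := by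
  have key := WellFoundedGT.induction_top
    (P := fun H : Set E.V => E.Hereditary H ∧ E.Saturated H ∧
      Relation.ReflTransGen E.CofinalStep (∅, ∅) (H, ∅))
    ⟨∅, admissible_empty.1, admissible_empty.2.1, .refl⟩
    fun H hne ⟨hH, hHs, hchain⟩ => by
      obtain ⟨H', hlt, hH', hH's, hstep⟩ := exists_gt_reflTransGen_cofinalStep hH hHs hne
      exact ⟨H', hlt, hH', hH's, hchain.trans hstep⟩
  exact key.2.2

end DGraph

/-- Corollary: every graph with finitely many vertices (possibly
with infinite emitters) has a composition series. -/
theorem comp_series_of_finite_vertices (E : DGraph) (h : Finite E.V) :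
    E.HasCompSeries := by
  have := h
  exact E.exists_chain_of_reflTransGen DGraph.admissible_empty DGraph.reflTransGen_cofinalStep_univ
end

section
/- Let E be a directed graph and v ∈ E⁰. Then the element [v] of the talented monoid M_E^Γ is periodic if and only if v lies in the saturated closure of a finite set of vertices lying on cycles without exits. -/
namespace DGraph

variable (E : DGraph)

/-- Generators `q^v_Z`: an infinite emitter `v` with a finite nonempty `Z ⊆ s⁻¹(v)`. -/
def QGen : Type :=
  {p : E.V × Set E.Ed // E.IsInfEmitter p.1 ∧ p.2 ⊆ E.emits p.1 ∧ p.2.Nonempty ∧ p.2.Finite}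

/-- Generators of the talented monoid: vertices and elements `q^v_Z`. -/
def TalGen : Type := E.V ⊕ E.QGen

/-- The free commutative `Γ`-monoid on the generators, `Γ = ⟨t⟩` infinite cyclic:
a basis element `(k, g)` stands for `tᵏ g`. -/
abbrev FreeTal : Type := (ℤ × E.TalGen) →₀ ℕ

/-- The element `Σ_{e ∈ F} t^{k+1}[r(e)]` of the free monoid. -/
noncomputable def tSum (k : ℤ) (F : Finset E.Ed) : E.FreeTal :=
  ∑ e ∈ F, Finsupp.single (k + 1, (Sum.inl (E.r e) : E.TalGen)) 1

/-- The defining relations of the talented monoid (at every degree `k`). -/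
def TalRel : E.FreeTal → E.FreeTal → Prop := fun x y =>
  (∃ (k : ℤ) (v : E.V) (h : E.IsRegular v),
      x = Finsupp.single (k, (Sum.inl v : E.TalGen)) 1 ∧ y = E.tSum k h.2.toFinset) ∨
  (∃ (k : ℤ) (g : E.QGen),
      x = Finsupp.single (k, (Sum.inl g.1.1 : E.TalGen)) 1 ∧
      y = (Finsupp.single (k, (Sum.inr g : E.TalGen)) 1 : E.FreeTal)
            + E.tSum k g.2.2.2.2.toFinset) ∨
  (∃ (k : ℤ) (g₁ g₂ : E.QGen),
      g₁.1.1 = g₂.1.1 ∧ g₁.1.2 ⊆ g₂.1.2 ∧ g₁.1.2 ≠ g₂.1.2 ∧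
      x = Finsupp.single (k, (Sum.inr g₁ : E.TalGen)) 1 ∧
      y = (Finsupp.single (k, (Sum.inr g₂ : E.TalGen)) 1 : E.FreeTal) +
            E.tSum k ((g₂.2.2.2.2.subset Set.diff_subset
              (t := g₂.1.2 \ g₁.1.2)).toFinset))

/-- The congruence generated by the defining relations. -/
noncomputable def talCon : AddCon E.FreeTal := addConGen E.TalRel

/-- The talented monoid `M_E^Γ`. -/
abbrev Tal : Type := E.talCon.Quotient

/-- The shift `tⁿ` on the free monoid. -/
noncomputable def shiftF (n : ℤ) : E.FreeTal →+ E.FreeTal :=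
  Finsupp.mapDomain.addMonoidHom (fun p => (p.1 + n, p.2))

theorem shiftF_single (n k : ℤ) (g : E.TalGen) (c : ℕ) :
    E.shiftF n (Finsupp.single (k, g) c) = Finsupp.single (k + n, g) c := by
  simp [shiftF, Finsupp.mapDomain.addMonoidHom_apply, Finsupp.mapDomain_single]

theorem shiftF_tSum (n k : ℤ) (F : Finset E.Ed) :
    E.shiftF n (E.tSum k F) = E.tSum (k + n) F := by
  unfold tSum
  rw [map_sum]
  refine Finset.sum_congr rfl fun e _ => ?_
  rw [add_right_comm]
  exact E.shiftF_single n (k + 1) _ 1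

theorem shiftF_rel (n : ℤ) {x y : E.FreeTal} (h : E.TalRel x y) :
    E.TalRel (E.shiftF n x) (E.shiftF n y) := by
  rcases h with ⟨k, v, hv, hx, hy⟩ | ⟨k, g, hx, hy⟩ | ⟨k, g₁, g₂, h1, h2, h3, hx, hy⟩
  · exact Or.inl ⟨k + n, v, hv, by rw [hx]; exact E.shiftF_single _ _ _ _, by rw [hy, shiftF_tSum]⟩
  · refine Or.inr (Or.inl ⟨k + n, g, by rw [hx]; exact E.shiftF_single _ _ _ _, ?_⟩)
    rw [hy, map_add, shiftF_tSum]
    exact congrArg (· + _) (E.shiftF_single _ _ _ _)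
  · refine Or.inr (Or.inr ⟨k + n, g₁, g₂, h1, h2, h3, by rw [hx]; exact E.shiftF_single _ _ _ _, ?_⟩)
    rw [hy, map_add, shiftF_tSum]
    exact congrArg (· + _) (E.shiftF_single _ _ _ _)

/-- The action of `tⁿ` on the talented monoid. -/
noncomputable def shiftT (n : ℤ) : E.Tal →+ E.Tal :=
  AddCon.lift E.talCon (E.talCon.mk'.comp (E.shiftF n)) (by
    refine AddCon.addConGen_le.mpr fun x y hxy => ?_
    have h := E.shiftF_rel n hxy
    show E.talCon.mk' (E.shiftF n x) = E.talCon.mk' (E.shiftF n y)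
    exact (AddCon.eq _).mpr (AddConGen.Rel.of _ _ h))

/-- The element `[v]` of the talented monoid. -/
noncomputable def tv (v : E.V) : E.Tal :=
  E.talCon.mk' (Finsupp.single ((0 : ℤ), (Sum.inl v : E.TalGen)) 1)

/-- The element `[q^v_Z]` of the talented monoid. -/
noncomputable def tq (g : E.QGen) : E.Tal :=
  E.talCon.mk' (Finsupp.single ((0 : ℤ), (Sum.inr g : E.TalGen)) 1)

/-- The algebraic (pre)order on the talented monoid. -/
def talLE (x y : E.Tal) : Prop := ∃ z, y = x + z

/-- A periodic element: nonzero with `tⁿ x = x` for some `n > 0`. -/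
def TPeriodic (x : E.Tal) : Prop := x ≠ 0 ∧ ∃ n : ℤ, 0 < n ∧ E.shiftT n x = x

/-- An aperiodic element: nonzero with `tⁿ x ≤ x`, `tⁿ x ≠ x` for some `n > 0`. -/
def TAperiodic (x : E.Tal) : Prop :=
  x ≠ 0 ∧ ∃ n : ℤ, 0 < n ∧ E.talLE (E.shiftT n x) x ∧ E.shiftT n x ≠ x

/-- An incomparable element: nonzero and incomparable with `tⁿ x` for every `n > 0`. -/
def TIncomparable (x : E.Tal) : Prop :=
  x ≠ 0 ∧ ∀ n : ℤ, 0 < n → ¬ E.talLE x (E.shiftT n x) ∧ ¬ E.talLE (E.shiftT n x) x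

/-- A comparable element: periodic or aperiodic. -/
def TComparable (x : E.Tal) : Prop := E.TPeriodic x ∨ E.TAperiodic x

/-- A `Γ`-order-ideal of the talented monoid. -/
def IsGOI (I : Set E.Tal) : Prop :=
  0 ∈ I ∧ (∀ x ∈ I, ∀ y ∈ I, x + y ∈ I) ∧
  (∀ n : ℤ, ∀ x ∈ I, E.shiftT n x ∈ I) ∧
  (∀ x y : E.Tal, x + y ∈ I → x ∈ I ∧ y ∈ I)

/-- The `Γ`-order-ideal generated by a set. -/
def genGOI (A : Set E.Tal) : Set E.Tal := ⋂₀ {I | E.IsGOI I ∧ A ⊆ I}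

/-- A minimal nonzero `Γ`-order-ideal. -/
def MinGOI (I : Set E.Tal) : Prop :=
  E.IsGOI I ∧ I ≠ {0} ∧ ∀ J, E.IsGOI J → J ⊆ I → J ≠ {0} → J = I

/-- The generator `q^v_Z` with `Z = s⁻¹(v) ∩ r⁻¹(E⁰ − H)`, for `v ∈ B_H`;
it represents `[v^H]`. -/
noncomputable def vhGen (H : Set E.V) (v : E.V) (h : v ∈ E.breaking H) : E.QGen :=
  ⟨(v, {e | E.s e = v ∧ E.r e ∉ H}), h.2.1, fun _ he => he.1, h.2.2.1, h.2.2.2⟩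

end DGraph

/-!
The free commutative `Γ`-monoid on the generators carries a rewriting system in which a step
replaces one generator by the right-hand side of a defining relation. It is locally confluent, so
equal elements of `M_E^Γ` have a common descendant. If `tⁿ[v] = [v]`, comparing descendants of
`[v]` and `t^{nk}[v]` shows that every vertex of `T(v)` is regular, and evaluating a common
descendant of `[v]` and `tⁿ[v]` at a high level shows that the path counts from `v` are eventually
`n`-periodic in the length. Since the number of paths from `v` never decreases, from some length
`M` on every vertex reached emits exactly one edge, and the successor map then permutes the
finitely many vertices at distance `M`: they lie on cycles without exits, and `v` lies in the
saturated closure of them. Conversely `[u] = t[r(e)]` along a cycle without exits, so its vertices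
are periodic, and periodicity passes from the ranges of a regular vertex to the vertex itself.
-/

open Function Relation

def AddMonoidHom.periodicPtsAddSubmonoid {M : Type*} [AddMonoid M] (f : M →+ M) :
    AddSubmonoid M where
  carrier := periodicPts f
  add_mem' := by
    rintro x y hx hy
    obtain ⟨m, hm, hx⟩ := mem_periodicPts.1 hx
    obtain ⟨n, hn, hy⟩ := mem_periodicPts.1 hy
    refine mem_periodicPts.2 ⟨m * n, Nat.mul_pos hm hn, ?_⟩
    rw [IsPeriodicPt, IsFixedPt, iterate_map_add, (hx.mul_const n).eq, (hy.const_mul m).eq]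
  zero_mem' := mem_periodicPts.2 ⟨1, one_pos, map_zero f⟩

theorem Finsupp.exists_eq_add_single_of_add_single_eq {α : Type*} {u₁ u₂ : α →₀ ℕ} {p₁ p₂ : α}
    (h : u₁ + single p₁ 1 = u₂ + single p₂ 1) (hp : p₁ ≠ p₂) :
    ∃ w, u₁ = w + single p₂ 1 ∧ u₂ = w + single p₁ 1 := by
  have hle : single p₂ 1 ≤ u₁ := by
    have h' := congrArg (· p₂) h
    simp only [add_apply, single_eq_same, single_eq_of_ne (Ne.symm hp)] at h'
    exact single_le_iff.2 (by omega)
  refine ⟨u₁ - single p₂ 1, (tsub_add_cancel_of_le hle).symm,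
    add_right_cancel (b := single p₂ 1) ?_⟩
  rw [← h, add_right_comm, tsub_add_cancel_of_le hle]

namespace DGraph

attribute [reducible] TalGen QGen

variable {E : DGraph}

section Shift

theorem shiftT_mk' (n : ℤ) (x : E.FreeTal) :
    E.shiftT n (E.talCon.mk' x) = E.talCon.mk' (E.shiftF n x) := rfl

theorem shiftT_add (a b : ℤ) (x : E.Tal) : E.shiftT a (E.shiftT b x) = E.shiftT (a + b) x := by
  induction x using AddCon.induction_on with
  | H y =>
    change E.shiftT a (E.shiftT b (E.talCon.mk' y)) = E.shiftT (a + b) (E.talCon.mk' y)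
    simp only [shiftT_mk', shiftF, Finsupp.mapDomain.addMonoidHom_apply,
      ← Finsupp.mapDomain_comp]
    congr 2
    funext p
    simp [Function.comp, add_assoc, add_comm b a]

theorem shiftT_zero (x : E.Tal) : E.shiftT 0 x = x := by
  induction x using AddCon.induction_on with
  | H y =>
    change E.talCon.mk' (E.shiftF 0 y) = E.talCon.mk' y
    have hid : (fun p : ℤ × E.TalGen => (p.1 + 0, p.2)) = id := by funext p; simp
    rw [shiftF, Finsupp.mapDomain.addMonoidHom_apply, hid, Finsupp.mapDomain_id]

theorem iterate_shiftT_one (n : ℕ) (x : E.Tal) : (E.shiftT 1)^[n] x = E.shiftT n x := by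
  induction n with
  | zero => exact (shiftT_zero x).symm
  | succ n ih => rw [iterate_succ_apply', ih, shiftT_add]; push_cast; ring_nf

theorem shiftT_tv (m : ℤ) (u : E.V) :
    E.shiftT m (E.tv u) = E.talCon.mk' (Finsupp.single (m, (Sum.inl u : E.TalGen)) 1) := by
  rw [tv, shiftT_mk', shiftF_single, zero_add]

theorem tv_eq_sum {u : E.V} (h : E.IsRegular u) :
    E.tv u = ∑ e ∈ h.2.toFinset, E.shiftT 1 (E.tv (E.r e)) := by
  have hrel : E.talCon.mk' (Finsupp.single (0, Sum.inl u) 1) =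
      E.talCon.mk' (E.tSum 0 h.2.toFinset) :=
    (AddCon.eq _).2 (AddConGen.Rel.of _ _ (Or.inl ⟨0, u, h, rfl, rfl⟩))
  rw [tv, hrel, tSum, map_sum]
  simp only [shiftT_tv, zero_add]

theorem tv_eq_shiftT_of_emits_eq {u : E.V} {e : E.Ed} (h : E.emits u = {e}) :
    E.tv u = E.shiftT 1 (E.tv (E.r e)) := by
  have hreg : E.IsRegular u := by
    rw [IsRegular, h]
    exact ⟨Set.singleton_nonempty e, Set.finite_singleton e⟩
  rw [tv_eq_sum hreg, show hreg.2.toFinset = {e} by ext; simp [h], Finset.sum_singleton]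

theorem tPeriodic_iff_mem_periodicPts {x : E.Tal} :
    E.TPeriodic x ↔ x ≠ 0 ∧ x ∈ periodicPts (E.shiftT 1) := by
  refine and_congr_right fun _ => ⟨?_, ?_⟩
  · rintro ⟨n, hn, hx⟩
    refine mem_periodicPts.2 ⟨n.toNat, by omega, ?_⟩
    rwa [IsPeriodicPt, IsFixedPt, iterate_shiftT_one, Int.toNat_of_nonneg hn.le]
  · intro hx
    obtain ⟨n, hn, hx⟩ := mem_periodicPts.1 hx
    exact ⟨n, by exact_mod_cast hn, by rw [← iterate_shiftT_one]; exact hx⟩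

end Shift

section Rewriting

def Step (E : DGraph) (x y : E.FreeTal) : Prop := ∃ u a b, E.TalRel a b ∧ x = u + a ∧ y = u + b

abbrev Steps (E : DGraph) : E.FreeTal → E.FreeTal → Prop := ReflTransGen E.Step

def DegGE (E : DGraph) (m : ℤ) (x : E.FreeTal) : Prop := ∀ q ∈ x.support, m ≤ q.1

def DegLE (E : DGraph) (m : ℤ) (x : E.FreeTal) : Prop := ∀ q ∈ x.support, q.1 ≤ m

theorem Step.of_talRel {a b : E.FreeTal} (h : E.TalRel a b) : E.Step a b :=
  ⟨0, a, b, h, (zero_add a).symm, (zero_add b).symm⟩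

theorem Step.add_left {x y : E.FreeTal} (h : E.Step x y) (z : E.FreeTal) :
    E.Step (z + x) (z + y) := by
  obtain ⟨u, a, b, hr, rfl, rfl⟩ := h
  exact ⟨z + u, a, b, hr, (add_assoc z u a).symm, (add_assoc z u b).symm⟩

theorem Step.add_right {x y : E.FreeTal} (h : E.Step x y) (z : E.FreeTal) :
    E.Step (x + z) (y + z) := by
  simpa only [add_comm _ z] using h.add_left z

theorem Steps.add {x y x' y' : E.FreeTal} (h : E.Steps x y) (h' : E.Steps x' y') :
    E.Steps (x + x') (y + y') :=
  (h.lift (· + x') fun _ _ hs => hs.add_right x').trans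
    (h'.lift (y + ·) fun _ _ hs => hs.add_left y)

theorem mem_support_tSum {k : ℤ} {F : Finset E.Ed} {q : ℤ × E.TalGen}
    (hq : q ∈ (E.tSum k F).support) : ∃ e ∈ F, q = (k + 1, Sum.inl (E.r e)) := by
  classical
  obtain ⟨e, he, hq⟩ := Finset.mem_biUnion.1 (Finsupp.support_finsetSum hq)
  exact ⟨e, he, Finset.mem_singleton.1 (Finsupp.support_single_subset hq)⟩

theorem tSum_apply_ne_zero {k : ℤ} {F : Finset E.Ed} {e : E.Ed} (he : e ∈ F) :
    E.tSum k F (k + 1, Sum.inl (E.r e)) ≠ 0 := by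
  rw [tSum, Finsupp.finsetSum_apply, Ne, Finset.sum_eq_zero_iff]
  exact fun h => by simpa using h e he

theorem TalRel.exists_eq_single {a b : E.FreeTal} (h : E.TalRel a b) :
    ∃ p, a = Finsupp.single p 1 ∧ b ≠ 0 ∧ E.DegGE p.1 b := by
  classical
  have hdeg : ∀ {k : ℤ} {F : Finset E.Ed} {q}, q ∈ (E.tSum k F).support → k ≤ q.1 := by
    intro k F q hq
    obtain ⟨e, -, rfl⟩ := mem_support_tSum hq
    exact Int.le_add_one le_rfl
  rcases h with ⟨k, v, hv, rfl, rfl⟩ | ⟨k, g, rfl, rfl⟩ | ⟨k, g₁, g₂, -, -, -, rfl, rfl⟩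
  · obtain ⟨e, he⟩ := hv.1
    refine ⟨_, rfl, fun h0 => tSum_apply_ne_zero (hv.2.mem_toFinset.2 he) (by rw [h0]; rfl),
      fun q hq => hdeg hq⟩
  all_goals
    refine ⟨_, rfl, by simp, fun q hq => ?_⟩
    rcases Finset.mem_union.1 (Finsupp.support_add hq) with hq | hq
    · exact (Finset.mem_singleton.1 (Finsupp.support_single_subset hq)) ▸ le_rfl
    · exact hdeg hq

theorem Step.ne_zero {x y : E.FreeTal} (h : E.Step x y) : x ≠ 0 ∧ y ≠ 0 := by
  obtain ⟨u, a, b, hr, rfl, rfl⟩ := h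
  obtain ⟨p, rfl, hb, -⟩ := hr.exists_eq_single
  exact ⟨by simp, fun h0 => hb (add_eq_zero.1 h0).2⟩

theorem eq_zero_of_join_zero {x : E.FreeTal} (h : Join E.Steps x 0) : x = 0 := by
  obtain ⟨c, hx, h0⟩ := h
  obtain rfl : c = 0 := by
    rcases ReflTransGen.cases_head h0 with rfl | ⟨z, hz, -⟩
    · rfl
    · exact absurd rfl hz.ne_zero.1
  rcases ReflTransGen.cases_tail hx with rfl | ⟨z, -, hz⟩
  · rfl
  · exact absurd rfl hz.ne_zero.2

def QGen.union (g g' : E.QGen) (h : g.1.1 = g'.1.1) : E.QGen :=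
  ⟨(g.1.1, g.1.2 ∪ g'.1.2), g.2.1, Set.union_subset g.2.2.1 (h ▸ g'.2.2.1),
    g.2.2.2.1.mono Set.subset_union_left, g.2.2.2.2.union g'.2.2.2.2⟩

/-- The element `tᵏ[q^v_Z] + Σ_{e ∈ Z - S} tᵏ⁺¹[r(e)]`: the right-hand sides of the last two
defining relations are the cases `S = ∅` and `S = Z'` with `Z' ⊊ Z`. -/
noncomputable def qRhs (k : ℤ) (g : E.QGen) (S : Set E.Ed) : E.FreeTal :=
  Finsupp.single (k, Sum.inr g) 1 + E.tSum k (g.2.2.2.2.sdiff (t := S)).toFinset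

theorem qRhs_empty (k : ℤ) (g : E.QGen) :
    E.qRhs k g ∅ = Finsupp.single (k, Sum.inr g) 1 + E.tSum k g.2.2.2.2.toFinset := by
  simp only [qRhs, Set.sdiff_empty]

theorem qRhs_reflGen {k : ℤ} {g G : E.QGen} {S : Set E.Ed} (hv : g.1.1 = G.1.1)
    (hsub : g.1.2 ⊆ G.1.2) (hS : S ⊆ g.1.2) : ReflGen E.Step (E.qRhs k g S) (E.qRhs k G S) := by
  classical
  by_cases heq : g.1.2 = G.1.2
  · obtain rfl : g = G := Subtype.ext (Prod.ext hv heq)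
    exact .refl
  refine .single ⟨E.tSum k _, _, _, Or.inr (Or.inr ⟨k, g, G, hv, hsub, heq, rfl, rfl⟩),
    add_comm _ _, ?_⟩
  simp only [qRhs, tSum]
  rw [add_left_comm, ← Finset.sum_union]
  · congr 2
    ext e
    simp only [Set.Finite.mem_toFinset, Set.mem_sdiff, Finset.mem_union]
    have := @hsub e
    have := @hS e
    tauto
  · rw [Finset.disjoint_left]
    simp only [Set.Finite.mem_toFinset, Set.mem_sdiff]
    tauto

theorem TalRel.join {p : ℤ × E.TalGen} {b₁ b₂ : E.FreeTal}
    (h₁ : E.TalRel (Finsupp.single p 1) b₁) (h₂ : E.TalRel (Finsupp.single p 1) b₂) :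
    ∃ d, ReflGen E.Step b₁ d ∧ ReflGen E.Step b₂ d := by
  rcases h₁ with ⟨k, v, hv, hp, rfl⟩ | ⟨k, g, hp, rfl⟩ | ⟨k, g₀, g, hv, hsub, -, hp, rfl⟩ <;>
  rcases h₂ with ⟨k', v', hv', hp', rfl⟩ | ⟨k', g', hp', rfl⟩ |
    ⟨k', g₀', g', hv', hsub', -, hp', rfl⟩ <;>
  rw [Finsupp.single_left_inj one_ne_zero] at hp hp' <;> subst hp <;>
  simp only [Prod.mk.injEq, Sum.inl.injEq, Sum.inr.injEq, reduceCtorEq, and_false] at hp'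
  · obtain ⟨rfl, rfl⟩ := hp'
    exact ⟨_, .refl, .refl⟩
  · exact absurd (hp'.2 ▸ hv.2) g'.2.1
  · exact absurd (hp'.2 ▸ hv'.2) g.2.1
  · obtain ⟨rfl, hgg'⟩ := hp'
    rw [← qRhs_empty, ← qRhs_empty]
    exact ⟨_, qRhs_reflGen (G := QGen.union g g' hgg') rfl Set.subset_union_left
      (Set.empty_subset _), qRhs_reflGen hgg'.symm Set.subset_union_right (Set.empty_subset _)⟩
  · obtain ⟨rfl, rfl⟩ := hp'
    have hgg' : g.1.1 = g'.1.1 := hv.symm.trans hv'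
    exact ⟨E.qRhs k (QGen.union g g' hgg') g₀.1.2,
      qRhs_reflGen rfl Set.subset_union_left hsub,
      qRhs_reflGen hgg'.symm Set.subset_union_right hsub'⟩

theorem Step.diamond {x y z : E.FreeTal} (hy : E.Step x y) (hz : E.Step x z) :
    ∃ d, ReflGen E.Step y d ∧ ReflTransGen E.Step z d := by
  obtain ⟨u₁, a₁, b₁, h₁, rfl, rfl⟩ := hy
  obtain ⟨u₂, a₂, b₂, h₂, hx, rfl⟩ := hz
  obtain ⟨p₁, rfl, -⟩ := h₁.exists_eq_single
  obtain ⟨p₂, rfl, -⟩ := h₂.exists_eq_single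
  by_cases hp : p₁ = p₂
  · subst hp
    obtain rfl := add_right_cancel hx
    obtain ⟨d, hd₁, hd₂⟩ := h₁.join h₂
    have hadd : ∀ {a b}, ReflGen E.Step a b → ReflGen E.Step (u₁ + a) (u₁ + b)
      | _, _, .refl => .refl
      | _, _, .single hs => .single (hs.add_left u₁)
    exact ⟨u₁ + d, hadd hd₁, (hadd hd₂).to_reflTransGen⟩
  · obtain ⟨w, rfl, rfl⟩ := Finsupp.exists_eq_add_single_of_add_single_eq hx hp
    refine ⟨w + b₁ + b₂, .single ?_, .single ?_⟩
    · simpa only [add_right_comm w] using (Step.of_talRel h₂).add_left (w + b₁)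
    · simpa only [add_right_comm w, add_assoc] using (Step.of_talRel h₁).add_left (w + b₂)

theorem join_of_mk'_eq {x y : E.FreeTal} (h : E.talCon.mk' x = E.talCon.mk' y) :
    Join E.Steps x y := by
  have hequiv := equivalence_join_reflTransGen (r := E.Step) fun _ _ _ hy hz => hy.diamond hz
  have hxy : AddConGen.Rel E.TalRel x y := (AddCon.eq _).1 h
  clear h
  induction hxy with
  | of _ y hr => exact ⟨y, .single (Step.of_talRel hr), .refl⟩
  | refl x => exact hequiv.refl x
  | symm _ ih => exact hequiv.symm ih
  | trans _ _ ih₁ ih₂ => exact hequiv.trans ih₁ ih₂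
  | add _ _ ih₁ ih₂ =>
    obtain ⟨c, h₁, h₂⟩ := ih₁
    obtain ⟨d, h₃, h₄⟩ := ih₂
    exact ⟨c + d, h₁.add h₃, h₂.add h₄⟩

theorem tv_ne_zero (v : E.V) : E.tv v ≠ 0 := fun h => by
  simpa using eq_zero_of_join_zero (join_of_mk'_eq (h.trans (map_zero E.talCon.mk').symm))

end Rewriting

section Regularity

theorem degGE_single (k : ℤ) (g : E.TalGen) : E.DegGE k (Finsupp.single (k, g) 1) := by
  intro q hq
  rw [Finset.mem_singleton.1 (Finsupp.support_single_subset hq)]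

theorem Step.degGE {m : ℤ} {x y : E.FreeTal} (hs : E.Step x y) (hx : E.DegGE m x) :
    E.DegGE m y := by
  classical
  obtain ⟨u, a, b, hr, rfl, rfl⟩ := hs
  obtain ⟨p, rfl, -, hb⟩ := hr.exists_eq_single
  rw [DegGE, Finsupp.support_add_eq_union] at hx
  have hp : m ≤ p.1 := hx p (by simp)
  intro q hq
  rw [Finsupp.support_add_eq_union, Finset.mem_union] at hq
  rcases hq with hq | hq
  · exact hx q (Finset.mem_union_left _ hq)
  · exact hp.trans (hb q hq)

theorem Steps.degGE {m : ℤ} {x y : E.FreeTal} (hs : E.Steps x y) (hx : E.DegGE m x) :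
    E.DegGE m y := by
  induction hs with
  | refl => exact hx
  | tail _ h ih => exact h.degGE ih

def HasQAt (E : DGraph) (j : ℤ) (x : E.FreeTal) : Prop := ∃ g : E.QGen, x (j, Sum.inr g) ≠ 0

theorem Step.hasQAt {j : ℤ} {x y : E.FreeTal} (hs : E.Step x y) (hx : E.HasQAt j x) :
    E.HasQAt j y := by
  obtain ⟨u, a, b, hr, rfl, rfl⟩ := hs
  obtain ⟨g, hg⟩ := hx
  by_cases hu : u (j, Sum.inr g) = 0
  · obtain ⟨p, rfl, -⟩ := hr.exists_eq_single
    obtain rfl : p = (j, Sum.inr g) := by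
      by_contra hne
      simp [Finsupp.single_eq_of_ne (Ne.symm hne), hu] at hg
    rcases hr with ⟨k, v, -, hp, -⟩ | ⟨k, g', hp, -⟩ | ⟨k, g₁, G, -, -, -, hp, rfl⟩ <;>
      rw [Finsupp.single_left_inj one_ne_zero] at hp <;>
      simp only [Prod.mk.injEq, reduceCtorEq, and_false] at hp
    exact ⟨G, by simp [hp.1]⟩
  · exact ⟨g, by simp [hu]⟩

theorem Steps.hasQAt {j : ℤ} {x y : E.FreeTal} (hs : E.Steps x y) (hx : E.HasQAt j x) :
    E.HasQAt j y := by
  induction hs with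
  | refl => exact hx
  | tail _ h ih => exact h.hasQAt ih

theorem Steps.exists_talRel_of_apply_ne_zero {x c : E.FreeTal} {p : ℤ × E.TalGen}
    (h : E.Steps x c) (hc : c p = 0) (hx : x p ≠ 0) :
    ∃ u b, E.TalRel (Finsupp.single p 1) b ∧ E.Steps (u + b) c := by
  revert hx
  induction h using ReflTransGen.head_induction_on with
  | refl => exact fun hx => absurd hc hx
  | head hs hrest ih =>
    intro hx
    obtain ⟨u, a, b, hr, rfl, rfl⟩ := hs
    obtain ⟨p', rfl, -⟩ := hr.exists_eq_single
    by_cases hp : p' = p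
    · subst hp
      exact ⟨u, b, hr, hrest⟩
    · have hu : u p ≠ 0 := by simpa [Finsupp.single_eq_of_ne (Ne.symm hp)] using hx
      exact ih (by simp [hu])

/-- Expanding `tʲ[w]` by a relation `[w] = [q^w_Z] + ⋯` instead would leave a generator of
degree `j < N` for good. -/
theorem Steps.isRegular_of_apply_ne_zero {x c : E.FreeTal} {N j : ℤ} {w : E.V}
    (h : E.Steps x c) (hN : E.DegGE N c) (hj : j < N) (hx : x (j, Sum.inl w) ≠ 0) :
    E.IsRegular w ∧ ∃ y, E.Steps y c ∧ ∀ e ∈ E.emits w, y (j + 1, Sum.inl (E.r e)) ≠ 0 := by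
  have hc : ∀ g, c (j, g) = 0 := fun g => by
    by_contra hne
    exact absurd (hN _ (Finsupp.mem_support_iff.2 hne)) (not_le.2 hj)
  obtain ⟨u, b, hr, hsteps⟩ := h.exists_talRel_of_apply_ne_zero (hc _) hx
  rcases hr with ⟨k, v, hv, hp, rfl⟩ | ⟨k, g, hp, rfl⟩ | ⟨k, g₁, g₂, -, -, -, hp, -⟩ <;>
    rw [Finsupp.single_left_inj one_ne_zero] at hp <;>
    simp only [Prod.mk.injEq, Sum.inl.injEq, reduceCtorEq, and_false] at hp
  · obtain ⟨rfl, rfl⟩ := hp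
    refine ⟨hv, u + E.tSum j hv.2.toFinset, hsteps, fun e he => ?_⟩
    simp [tSum_apply_ne_zero (hv.2.mem_toFinset.2 he)]
  · obtain ⟨rfl, -⟩ := hp
    obtain ⟨g', hg'⟩ := hsteps.hasQAt (j := j) ⟨g, by simp⟩
    exact absurd (hc _) hg'

def TreeRegular (E : DGraph) (u : E.V) : Prop := ∀ w, E.Reaches u w → E.IsRegular w

theorem TreeRegular.of_reaches {u w : E.V} (hu : E.TreeRegular u) (h : E.Reaches u w) :
    E.TreeRegular w :=
  fun y hy => hu y (h.trans hy)

/-- A vertex `u` at distance `j` from `v` appears as `tʲ[u]` in rewritings of `[v]`; since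
`[v] = t^{nk}[v]` for all `k`, these rewritings can be forced to end in arbitrarily high
degrees, so `u` is regular. -/
theorem treeRegular_of_mem_periodicPts {v : E.V} (h : E.tv v ∈ periodicPts (E.shiftT 1)) :
    E.TreeRegular v := by
  obtain ⟨n, hn, hper⟩ := mem_periodicPts.1 h
  have hdesc : ∀ k : ℕ, ∃ c, E.Steps (Finsupp.single (0, Sum.inl v) 1) c ∧
      E.DegGE (n * k : ℕ) c := by
    intro k
    have h' := (hper.mul_const k).eq
    rw [iterate_shiftT_one, shiftT_tv] at h'
    obtain ⟨c, h₁, h₂⟩ := join_of_mk'_eq h'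
    exact ⟨c, h₂, h₁.degGE (degGE_single _ _)⟩
  have hpath : ∀ u, E.Reaches v u → ∃ j : ℕ, ∀ (N : ℤ) c, E.DegGE N c →
      E.Steps (Finsupp.single (0, Sum.inl v) 1) c → (j : ℤ) < N →
      ∃ y, E.Steps y c ∧ y (j, Sum.inl u) ≠ 0 := by
    intro u hu
    induction hu with
    | refl => exact ⟨0, fun N c _ hc _ => ⟨_, hc, by simp⟩⟩
    | tail _ hadj ih =>
      obtain ⟨j, hj⟩ := ih
      obtain ⟨e, he, rfl⟩ := hadj
      refine ⟨j + 1, fun N c hN hc hjN => ?_⟩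
      obtain ⟨y, hy, hyu⟩ := hj N c hN hc (by omega)
      obtain ⟨-, y', hy', hsucc⟩ := hy.isRegular_of_apply_ne_zero hN (by omega) hyu
      exact ⟨y', hy', by simpa using hsucc e he⟩
  intro u hu
  obtain ⟨j, hj⟩ := hpath u hu
  obtain ⟨c, hc, hN⟩ := hdesc (j + 1)
  have hjN : (j : ℤ) < (n * (j + 1) : ℕ) := by push_cast; nlinarith
  obtain ⟨y, hy, hyu⟩ := hj _ c hN hc hjN
  exact (hy.isRegular_of_apply_ne_zero hN hjN hyu).1

end Regularity

section PathSums

theorem reaches_range {u : E.V} {e : E.Ed} (he : e ∈ E.emits u) : E.Reaches u (E.r e) :=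
  .single ⟨e, he, rfl⟩

open Classical in
/-- `pathSum f l u` sums `f` over the ranges of the paths of length `l` starting at `u`; paths
through an infinite emitter contribute `0`. -/
noncomputable def pathSum (E : DGraph) (f : E.V → ℕ) : ℕ → E.V → ℕ
  | 0, u => f u
  | l + 1, u => if h : (E.emits u).Finite then ∑ e ∈ h.toFinset, pathSum E f l (E.r e) else 0

open Classical in
noncomputable def pathEnds (E : DGraph) : ℕ → E.V → Finset E.V
  | 0, u => {u}
  | l + 1, u =>
    if h : (E.emits u).Finite then h.toFinset.biUnion fun e => pathEnds E l (E.r e) else ∅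

variable {f : E.V → ℕ} {l : ℕ} {u w : E.V}

theorem pathSum_succ (h : (E.emits u).Finite) :
    E.pathSum f (l + 1) u = ∑ e ∈ h.toFinset, E.pathSum f l (E.r e) := by
  rw [pathSum, dif_pos h]

theorem mem_pathEnds_zero : w ∈ E.pathEnds 0 u ↔ w = u := by
  simp [pathEnds]

theorem mem_pathEnds_succ (h : (E.emits u).Finite) :
    w ∈ E.pathEnds (l + 1) u ↔ ∃ e ∈ E.emits u, w ∈ E.pathEnds l (E.r e) := by
  simp [pathEnds, h]

theorem pathSum_ne_zero_iff : E.pathSum f l u ≠ 0 ↔ ∃ w ∈ E.pathEnds l u, f w ≠ 0 := by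
  induction l generalizing u with
  | zero => simp [pathSum, mem_pathEnds_zero]
  | succ l ih =>
    by_cases hf : (E.emits u).Finite
    · simp only [pathSum_succ hf, mem_pathEnds_succ hf, Ne, Finset.sum_eq_zero_iff,
        Set.Finite.mem_toFinset, not_forall, ih]
      aesop
    · simp [pathSum, pathEnds, hf]

theorem mem_pathEnds_succ_iff_last (hu : E.TreeRegular u) :
    w ∈ E.pathEnds (l + 1) u ↔ ∃ x ∈ E.pathEnds l u, ∃ e ∈ E.emits x, E.r e = w := by
  induction l generalizing u with
  | zero => simp [mem_pathEnds_succ (hu u .refl).2, mem_pathEnds_zero, eq_comm]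
  | succ l ih =>
    have hf := (hu u .refl).2
    constructor
    · intro h
      obtain ⟨e, he, hw⟩ := (mem_pathEnds_succ hf).1 h
      obtain ⟨x, hx, e', he', rfl⟩ := (ih (hu.of_reaches (reaches_range he))).1 hw
      exact ⟨x, (mem_pathEnds_succ hf).2 ⟨e, he, hx⟩, e', he', rfl⟩
    · rintro ⟨x, hx, e', he', rfl⟩
      obtain ⟨e, he, hx⟩ := (mem_pathEnds_succ hf).1 hx
      exact (mem_pathEnds_succ hf).2
        ⟨e, he, (ih (hu.of_reaches (reaches_range he))).2 ⟨x, hx, e', he', rfl⟩⟩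

theorem pathSum_one_le_succ (hu : E.TreeRegular u) : E.pathSum 1 l u ≤ E.pathSum 1 (l + 1) u := by
  induction l generalizing u with
  | zero =>
    obtain ⟨hne, hf⟩ := hu u .refl
    rw [pathSum_succ hf]
    simp only [pathSum, Pi.one_apply, Finset.sum_const, smul_eq_mul, mul_one]
    exact Finset.card_pos.2 (hf.toFinset_nonempty.2 hne)
  | succ l ih =>
    have hf := (hu u .refl).2
    rw [pathSum_succ hf, pathSum_succ hf]
    exact Finset.sum_le_sum fun e he =>
      ih (hu.of_reaches (reaches_range (hf.mem_toFinset.1 he)))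

theorem pathSum_one_lt_succ (hu : E.TreeRegular u) (hw : w ∈ E.pathEnds l u)
    (hout : ¬∃ e, E.emits w = {e}) : E.pathSum 1 l u < E.pathSum 1 (l + 1) u := by
  induction l generalizing u with
  | zero =>
    obtain rfl := mem_pathEnds_zero.1 hw
    obtain ⟨hne, hf⟩ := hu w .refl
    have h1 : hf.toFinset.card ≠ 1 := fun h1 => by
      obtain ⟨e, he⟩ := Finset.card_eq_one.1 h1
      exact hout ⟨e, by rw [← hf.coe_toFinset, he, Finset.coe_singleton]⟩
    have h0 : 0 < hf.toFinset.card := Finset.card_pos.2 (hf.toFinset_nonempty.2 hne)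
    rw [pathSum_succ hf]
    simp only [pathSum, Pi.one_apply, Finset.sum_const, smul_eq_mul, mul_one]
    omega
  | succ l ih =>
    have hf := (hu u .refl).2
    obtain ⟨e, he, hw⟩ := (mem_pathEnds_succ hf).1 hw
    rw [pathSum_succ hf, pathSum_succ hf]
    exact Finset.sum_lt_sum
      (fun e' he' => pathSum_one_le_succ (hu.of_reaches (reaches_range (hf.mem_toFinset.1 he'))))
      ⟨e, hf.mem_toFinset.2 he, ih (hu.of_reaches (reaches_range he)) hw⟩

theorem mem_of_pathEnds_subset {H : Set E.V} (hH : E.Saturated H) (hu : E.TreeRegular u)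
    (h : ↑(E.pathEnds l u) ⊆ H) : u ∈ H := by
  induction l generalizing u with
  | zero => exact h (mem_pathEnds_zero.2 rfl)
  | succ l ih =>
    have hreg := hu u .refl
    exact hH u hreg fun e he => ih (hu.of_reaches (reaches_range he)) fun w hw =>
      h ((mem_pathEnds_succ hreg.2).2 ⟨e, he, hw⟩)

theorem mem_satClosure_pathEnds (hu : E.TreeRegular u) (l : ℕ) :
    u ∈ E.satClosure ↑(E.pathEnds l u) :=
  Set.mem_sInter.2 fun _ ⟨_, hsat, hsub⟩ => mem_of_pathEnds_subset hsat hu hsub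

end PathSums

section LevelEval

theorem exists_degLE (x : E.FreeTal) : ∃ M : ℕ, E.DegLE M x :=
  ⟨x.support.sup fun q => q.1.toNat, fun q hq =>
    (Int.self_le_toNat q.1).trans (by exact_mod_cast Finset.le_sup (f := fun q => q.1.toNat) hq)⟩

theorem Step.degLE {L : ℤ} {x y : E.FreeTal} (hs : E.Step x y) (hy : E.DegLE L y) :
    E.DegLE L x := by
  classical
  obtain ⟨u, a, b, hr, rfl, rfl⟩ := hs
  obtain ⟨p, rfl, hb, hdeg⟩ := hr.exists_eq_single
  rw [DegLE, Finsupp.support_add_eq_union] at hy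
  obtain ⟨q, hq⟩ := Finsupp.support_nonempty_iff.2 hb
  intro q' hq'
  rw [Finsupp.support_add_eq_union, Finset.mem_union] at hq'
  rcases hq' with hq' | hq'
  · exact hy q' (Finset.mem_union_left _ hq')
  · rw [Finset.mem_singleton.1 (Finsupp.support_single_subset hq')]
    exact (hdeg q hq).trans (hy q (Finset.mem_union_right _ hq))

theorem Steps.degLE {L : ℤ} {x y : E.FreeTal} (hs : E.Steps x y) (hy : E.DegLE L y) :
    E.DegLE L x := by
  induction hs using ReflTransGen.head_induction_on with
  | refl => exact hy
  | head h _ ih => exact h.degLE ih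

/-- `tᵏ[u] ↦ pathSum f (L - k) u` for `k ≤ L`; this respects the relations of the regular vertices
in degrees `< L`. -/
noncomputable def levelEval (E : DGraph) (f : E.V → ℕ) (L : ℤ) : E.FreeTal →ₗ[ℕ] ℕ :=
  Finsupp.linearCombination ℕ fun q =>
    q.2.elim (fun u => if q.1 ≤ L then E.pathSum f (L - q.1).toNat u else 0) 0

theorem levelEval_single {f : E.V → ℕ} {L k : ℤ} (hk : k ≤ L) (u : E.V) :
    E.levelEval f L (Finsupp.single (k, Sum.inl u) 1) = E.pathSum f (L - k).toNat u := by
  simp [levelEval, hk]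

def RegularSupport (E : DGraph) (x : E.FreeTal) : Prop :=
  ∀ q ∈ x.support, ∃ u, q.2 = Sum.inl u ∧ E.TreeRegular u

theorem regularSupport_single {u : E.V} (hu : E.TreeRegular u) (k : ℤ) :
    E.RegularSupport (Finsupp.single (k, Sum.inl u) 1) := by
  intro q hq
  rw [Finset.mem_singleton.1 (Finsupp.support_single_subset hq)]
  exact ⟨u, rfl, hu⟩

theorem mem_support_add_single (u : E.FreeTal) (p : ℤ × E.TalGen) :
    p ∈ (u + Finsupp.single p 1).support := by
  simp

theorem Step.eq_of_regularSupport {x y : E.FreeTal} (hx : E.RegularSupport x)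
    (hs : E.Step x y) : ∃ u k w, ∃ h : E.IsRegular w, E.TreeRegular w ∧
      x = u + Finsupp.single (k, Sum.inl w) 1 ∧ y = u + E.tSum k h.2.toFinset := by
  obtain ⟨u, a, b, hr, rfl, rfl⟩ := hs
  rcases hr with ⟨k, v, hv, rfl, rfl⟩ | ⟨k, g, rfl, rfl⟩ | ⟨k, g₁, g₂, -, -, -, rfl, rfl⟩ <;>
    obtain ⟨w, hw, hreg⟩ := hx _ (mem_support_add_single u _) <;>
    simp only [Sum.inl.injEq, reduceCtorEq] at hw
  · subst hw
    exact ⟨u, k, v, hv, hreg, rfl, rfl⟩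
  · exact absurd (hw ▸ (hreg w .refl).2) g.2.1

theorem Step.regularSupport {x y : E.FreeTal} (hx : E.RegularSupport x) (hs : E.Step x y) :
    E.RegularSupport y := by
  classical
  obtain ⟨u, k, w, hreg, hw, rfl, rfl⟩ := hs.eq_of_regularSupport hx
  rw [RegularSupport, Finsupp.support_add_eq_union] at hx
  intro q hq
  rw [Finsupp.support_add_eq_union, Finset.mem_union] at hq
  rcases hq with hq | hq
  · exact hx q (Finset.mem_union_left _ hq)
  · obtain ⟨e, he, rfl⟩ := mem_support_tSum hq
    exact ⟨E.r e, rfl, hw.of_reaches (reaches_range (hreg.2.mem_toFinset.1 he))⟩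

theorem Step.levelEval_eq {f : E.V → ℕ} {L : ℤ} {x y : E.FreeTal} (hx : E.RegularSupport x)
    (hs : E.Step x y) (hy : E.DegLE L y) : E.levelEval f L x = E.levelEval f L y := by
  classical
  obtain ⟨u, k, w, hreg, -, rfl, rfl⟩ := hs.eq_of_regularSupport hx
  obtain ⟨e₀, he₀⟩ := hreg.1
  have hkL : k + 1 ≤ L := hy _ (by
    rw [Finsupp.support_add_eq_union]
    exact Finset.mem_union_right _ (Finsupp.mem_support_iff.2
      (tSum_apply_ne_zero (hreg.2.mem_toFinset.2 he₀))))
  rw [map_add, map_add, levelEval_single (by omega), tSum, map_sum,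
    show (L - k).toNat = (L - (k + 1)).toNat + 1 by omega, pathSum_succ hreg.2]
  simp only [levelEval_single hkL]

theorem Steps.levelEval_eq {f : E.V → ℕ} {L : ℤ} {x z : E.FreeTal} (hx : E.RegularSupport x)
    (hs : E.Steps x z) (hz : E.DegLE L z) : E.levelEval f L x = E.levelEval f L z := by
  induction hs using ReflTransGen.head_induction_on with
  | refl => rfl
  | head h hrest ih =>
    exact (h.levelEval_eq hx (Steps.degLE hrest hz)).trans (ih (h.regularSupport hx))

/-- Evaluate a common descendant of `[v]` and `tⁿ[v]` at level `l + n`. -/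
theorem exists_pathSum_add_eq {v : E.V} {n : ℕ} (hv : E.TreeRegular v)
    (hper : IsPeriodicPt (E.shiftT 1) n (E.tv v)) :
    ∃ M, ∀ f l, M ≤ l → E.pathSum f (l + n) v = E.pathSum f l v := by
  have h := hper.eq
  rw [iterate_shiftT_one, shiftT_tv] at h
  obtain ⟨c, h₁, h₂⟩ := join_of_mk'_eq h
  obtain ⟨M, hM⟩ := exists_degLE c
  refine ⟨M, fun f l hl => ?_⟩
  have hc : E.DegLE (l + n : ℕ) c := fun q hq => (hM q hq).trans (by omega)
  have e₁ := h₂.levelEval_eq (f := f) (regularSupport_single hv 0) hc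
  have e₂ := h₁.levelEval_eq (f := f) (regularSupport_single hv n) hc
  rw [levelEval_single (by omega)] at e₁ e₂
  rw [show l + n = ((l + n : ℕ) - 0 : ℤ).toNat by omega, e₁, ← e₂]
  congr 1
  omega

end LevelEval

section Walks

variable {u x : E.V} {e : E.Ed} {es : List E.Ed}

theorem isWalkFrom_nil (u : E.V) : E.IsWalkFrom u [] := ⟨List.isChain_nil, by simp⟩

theorem isWalkFrom_cons : E.IsWalkFrom u (e :: es) ↔ E.s e = u ∧ E.IsWalkFrom (E.r e) es := by
  refine ⟨fun ⟨hc, hs⟩ => ?_, fun ⟨hs, hc, hh⟩ => ⟨List.isChain_cons.2 ⟨?_, hc⟩, ?_⟩⟩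
  · obtain ⟨h₁, h₂⟩ := List.isChain_cons.1 hc
    exact ⟨hs e rfl, h₂, fun f hf => (h₁ f hf).symm⟩
  · exact fun f hf => (hh f hf).symm
  · simpa using hs

theorem endVert_cons : E.endVert u (e :: es) = E.endVert (E.r e) es := by
  simp only [endVert, List.getLast?_cons]
  cases es.getLast? <;> rfl

theorem walkVerts_cons : E.walkVerts u (e :: es) = insert u (E.walkVerts (E.r e) es) := by
  ext x
  simp only [walkVerts, Set.mem_insert_iff, Set.mem_ofPred_eq, List.mem_cons]
  constructor
  · rintro (rfl | ⟨f, rfl | hf, rfl⟩)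
    exacts [Or.inl rfl, Or.inr (Or.inl rfl), Or.inr (Or.inr ⟨f, hf, rfl⟩)]
  · rintro (rfl | rfl | ⟨f, hf, rfl⟩)
    exacts [Or.inl rfl, Or.inr ⟨e, Or.inl rfl, rfl⟩, Or.inr ⟨f, Or.inr hf, rfl⟩]

theorem IsWalkFrom.source_mem_walkVerts (hw : E.IsWalkFrom u es) (he : e ∈ es) :
    E.s e ∈ E.walkVerts u es := by
  induction es generalizing u with
  | nil => simp at he
  | cons f es ih =>
    obtain ⟨rfl, hw'⟩ := isWalkFrom_cons.1 hw
    rw [walkVerts_cons]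
    rcases List.mem_cons.1 he with rfl | he
    · exact Set.mem_insert _ _
    · exact Set.mem_insert_of_mem _ (ih hw' he)

theorem isWalkFrom_map_range' {edge : ℕ → E.Ed} (hedge : ∀ i, E.r (edge i) = E.s (edge (i + 1)))
    (k N : ℕ) : E.IsWalkFrom (E.s (edge k)) ((List.range' k N).map edge) ∧
      E.endVert (E.s (edge k)) ((List.range' k N).map edge) = E.s (edge (k + N)) := by
  induction N generalizing k with
  | zero => exact ⟨isWalkFrom_nil _, rfl⟩
  | succ N ih =>
    obtain ⟨h₁, h₂⟩ := ih (k + 1)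
    rw [List.range'_succ, List.map_cons, isWalkFrom_cons, endVert_cons, hedge, h₂,
      add_right_comm, add_assoc]
    exact ⟨⟨rfl, h₁⟩, rfl⟩

/-- `[s(e)] = t[r(e)]` at each step of such a walk. -/
theorem exists_iterate_of_mem_walkVerts (hw : E.IsWalkFrom u es)
    (hout : ∀ e ∈ es, E.emits (E.s e) = {e}) (hx : x ∈ E.walkVerts u es) :
    ∃ a b, a + b = es.length ∧ E.tv u = (E.shiftT 1)^[a] (E.tv x) ∧
      E.tv x = (E.shiftT 1)^[b] (E.tv (E.endVert u es)) := by
  induction es generalizing u x with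
  | nil =>
    obtain rfl : x = u := by simpa [walkVerts] using hx
    exact ⟨0, 0, rfl, rfl, rfl⟩
  | cons e es ih =>
    obtain ⟨rfl, hw'⟩ := isWalkFrom_cons.1 hw
    have hout' : ∀ f ∈ es, E.emits (E.s f) = {f} := fun f hf => hout f (List.mem_cons_of_mem _ hf)
    have hu := tv_eq_shiftT_of_emits_eq (hout e List.mem_cons_self)
    rw [walkVerts_cons] at hx
    rw [endVert_cons]
    rcases hx with rfl | hx
    · obtain ⟨a, b, hab, h₁, h₂⟩ := ih hw' hout' (Set.mem_insert _ _)
      refine ⟨0, a + b + 1, by simp [hab], rfl, ?_⟩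
      rw [hu, h₁.trans (congrArg _ h₂), iterate_succ_apply', iterate_add_apply]
    · obtain ⟨a, b, hab, h₁, h₂⟩ := ih hw' hout' hx
      exact ⟨a + 1, b, by simp [← hab]; omega, by rw [hu, h₁, iterate_succ_apply'], h₂⟩

end Walks

section Cycles

def OnCycleWithoutExit (E : DGraph) (u : E.V) : Prop :=
  ∃ u₀ es, E.IsCycle u₀ es ∧ ¬ E.HasExit u₀ es ∧ u ∈ E.walkVerts u₀ es

variable {u₀ u w : E.V} {e : E.Ed} {es : List E.Ed}

theorem emits_eq_singleton_of_isCycle (hc : E.IsCycle u₀ es) (hne : ¬ E.HasExit u₀ es)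
    (he : e ∈ es) : E.emits (E.s e) = {e} := by
  ext f
  refine ⟨fun hf => ?_, fun hf => hf ▸ rfl⟩
  have hfes : f ∈ es := by
    by_contra hfes
    exact hne ⟨_, hc.2.1.source_mem_walkVerts he, f, hf, hfes⟩
  exact List.inj_on_of_nodup_map hc.2.2.2 hfes he hf

theorem mem_walkVerts_of_reaches (hne : ¬ E.HasExit u₀ es) (hu : u ∈ E.walkVerts u₀ es)
    (h : E.Reaches u w) : w ∈ E.walkVerts u₀ es := by
  induction h with
  | refl => exact hu
  | tail _ hadj ih =>
    obtain ⟨f, hf, rfl⟩ := hadj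
    have hfes : f ∈ es := by
      by_contra hfes
      exact hne ⟨_, ih, f, hf, hfes⟩
    exact Set.mem_insert_of_mem _ ⟨f, hfes, rfl⟩

theorem OnCycleWithoutExit.of_reaches (hu : E.OnCycleWithoutExit u) (h : E.Reaches u w) :
    E.OnCycleWithoutExit w :=
  let ⟨u₀, es, hc, hne, hu⟩ := hu
  ⟨u₀, es, hc, hne, mem_walkVerts_of_reaches hne hu h⟩

theorem OnCycleWithoutExit.tv_mem_periodicPts (hu : E.OnCycleWithoutExit u) :
    E.tv u ∈ periodicPts (E.shiftT 1) := by
  obtain ⟨u₀, es, hc, hne, hu⟩ := hu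
  obtain ⟨a, b, hab, h₁, h₂⟩ := exists_iterate_of_mem_walkVerts hc.2.1
    (fun e he => emits_eq_singleton_of_isCycle hc hne he) hu
  rw [hc.2.2.1] at h₂
  refine mem_periodicPts.2 ⟨b + a, ?_, ?_⟩
  · rw [add_comm, hab]
    exact List.length_pos_iff.2 hc.1
  · rw [IsPeriodicPt, IsFixedPt, iterate_add_apply, ← h₁, ← h₂]

/-- The vertices `u` with `[w]` periodic for every `w ∈ T(u)` form a hereditary saturated set
containing `W`, since the tree of a vertex on a cycle without exits is the cycle itself. -/
theorem tv_mem_periodicPts_of_mem_satClosure {W : Set E.V} {v : E.V}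
    (hW : ∀ u ∈ W, E.OnCycleWithoutExit u) (hv : v ∈ E.satClosure W) :
    E.tv v ∈ periodicPts (E.shiftT 1) := by
  let H : Set E.V := {u | ∀ w, E.Reaches u w → E.tv w ∈ periodicPts (E.shiftT 1)}
  have hsat : E.Saturated H := by
    intro u hreg hsucc w huw
    rcases ReflTransGen.cases_head huw with rfl | ⟨x, ⟨e, he, rfl⟩, hxw⟩
    · rw [tv_eq_sum hreg]
      exact (E.shiftT 1).periodicPtsAddSubmonoid.sum_mem fun e he =>
        (bijOn_periodicPts _).mapsTo (hsucc e (hreg.2.mem_toFinset.1 he) _ .refl)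
    · exact hsucc e he w hxw
  have hsub : W ⊆ H := fun u hu w huw => ((hW u hu).of_reaches huw).tv_mem_periodicPts
  exact Set.mem_sInter.1 hv H ⟨fun u hu w huw y hwy => hu y (huw.trans hwy), hsat, hsub⟩ v .refl

end Cycles

section Forward

open Classical in
noncomputable def next (E : DGraph) (u : E.V) : E.V :=
  if h : ∃ e, E.emits u = {e} then E.r h.choose else u

variable {v w : E.V}

theorem next_eq {u : E.V} {e : E.Ed} (h : E.emits u = {e}) : E.next u = E.r e := by
  have h' : ∃ e, E.emits u = {e} := ⟨e, h⟩
  rw [next, dif_pos h', Set.singleton_eq_singleton_iff.1 (h'.choose_spec.symm.trans h)]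

/-- Following the unique outgoing edges from a periodic point of `next` for one minimal period
traces a cycle, and it has no exit since each of its vertices emits only one edge. -/
theorem onCycleWithoutExit_of_isPeriodicPt {n : ℕ} (hn : 0 < n) (hw : IsPeriodicPt E.next n w)
    (hout : ∀ i, ∃ e, E.emits (E.next^[i] w) = {e}) : E.OnCycleWithoutExit w := by
  choose edge hedge using hout
  have hs : ∀ i, E.s (edge i) = E.next^[i] w := fun i =>
    show edge i ∈ E.emits (E.next^[i] w) from (hedge i).symm ▸ rfl
  have hr : ∀ i, E.r (edge i) = E.s (edge (i + 1)) := fun i => by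
    rw [hs, iterate_succ_apply', next_eq (hedge i)]
  set p := minimalPeriod E.next w
  have hp : 0 < p := hw.minimalPeriod_pos hn
  obtain ⟨hwalk, hend⟩ := isWalkFrom_map_range' hr 0 p
  rw [hs, zero_add, hs, iterate_zero_apply, (isPeriodicPt_minimalPeriod E.next w).eq] at hend
  rw [hs, iterate_zero_apply] at hwalk
  refine ⟨w, _, ⟨by simp [hp.ne'], hwalk, hend, ?_⟩, ?_, Set.mem_insert _ _⟩
  · rw [List.map_map]
    refine List.Nodup.map_on (fun i hi j hj hij => ?_) (List.nodup_range' _)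
    simp only [comp_apply, hs] at hij
    exact iterate_injOn_Iio_minimalPeriod (by simpa using (List.mem_range'_1.1 hi).2)
      (by simpa using (List.mem_range'_1.1 hj).2) hij
  · rintro ⟨x, hx, f, hf, hfn⟩
    obtain ⟨i, hi, rfl⟩ : ∃ i < p, x = E.next^[i] w := by
      rcases hx with rfl | ⟨e, he, rfl⟩
      · exact ⟨0, hp, rfl⟩
      obtain ⟨i, hi, rfl⟩ := List.mem_map.1 he
      have hi : i < p := by simpa using (List.mem_range'_1.1 hi).2
      rw [hr, hs]
      rcases Nat.lt_or_ge (i + 1) p with hi' | hi'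
      · exact ⟨i + 1, hi', rfl⟩
      · rw [show i + 1 = p by omega, (isPeriodicPt_minimalPeriod E.next w).eq]
        exact ⟨0, hp, rfl⟩
    have hfi : f = edge i := by
      have hf' : f ∈ E.emits (E.next^[i] w) := hf
      rwa [hedge] at hf'
    exact hfn (hfi ▸ List.mem_map.2 ⟨i, List.mem_range'_1.2 ⟨Nat.zero_le i, by omega⟩, rfl⟩)

variable {n M : ℕ}

/-- Otherwise the number of paths from `v` would grow strictly at length `l`, against its
periodicity. -/
theorem emits_eq_singleton_of_mem_pathEnds (hv : E.TreeRegular v) (hn : 0 < n)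
    (hM : ∀ f l, M ≤ l → E.pathSum f (l + n) v = E.pathSum f l v) {l : ℕ} (hl : M ≤ l)
    (hw : w ∈ E.pathEnds l v) : ∃ e, E.emits w = {e} := by
  by_contra hw'
  have hmono : Monotone fun l => E.pathSum 1 l v :=
    monotone_nat_of_le_succ fun _ => pathSum_one_le_succ hv
  have hlt := (pathSum_one_lt_succ hv hw hw').trans_le (hmono (show l + 1 ≤ l + n by omega))
  exact (hM 1 l hl ▸ hlt).false

theorem pathEnds_add_eq (hM : ∀ f l, M ≤ l → E.pathSum f (l + n) v = E.pathSum f l v) :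
    E.pathEnds (M + n) v = E.pathEnds M v := by
  classical
  ext x
  have h := congrArg (· ≠ 0) (hM (fun y => if y = x then 1 else 0) M le_rfl)
  simpa [pathSum_ne_zero_iff] using h

theorem mapsTo_surjOn_next {l : ℕ} (hv : E.TreeRegular v)
    (hout : ∀ x ∈ E.pathEnds l v, ∃ e, E.emits x = {e}) :
    Set.MapsTo E.next ↑(E.pathEnds l v) ↑(E.pathEnds (l + 1) v) ∧
      Set.SurjOn E.next ↑(E.pathEnds l v) ↑(E.pathEnds (l + 1) v) := by
  refine ⟨fun x hx => ?_, fun w hw => ?_⟩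
  · obtain ⟨e, he⟩ := hout x hx
    rw [next_eq he]
    exact (mem_pathEnds_succ_iff_last hv).2 ⟨x, hx, e, he ▸ rfl, rfl⟩
  · obtain ⟨x, hx, e, he, rfl⟩ := (mem_pathEnds_succ_iff_last hv).1 hw
    obtain ⟨e', he'⟩ := hout x hx
    rw [he'] at he
    exact ⟨x, hx, by rw [next_eq he', he]⟩

/-- `next^[n]` permutes the finite set of vertices at level `M`, so these are periodic points of
`next`. -/
theorem onCycleWithoutExit_of_mem_pathEnds (hv : E.TreeRegular v) (hn : 0 < n)
    (hM : ∀ f l, M ≤ l → E.pathSum f (l + n) v = E.pathSum f l v) (hw : w ∈ E.pathEnds M v) :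
    E.OnCycleWithoutExit w := by
  have hout : ∀ l, M ≤ l → ∀ x ∈ E.pathEnds l v, ∃ e, E.emits x = {e} :=
    fun l hl x hx => emits_eq_singleton_of_mem_pathEnds hv hn hM hl hx
  have hiter : ∀ m, Set.MapsTo E.next^[m] ↑(E.pathEnds M v) ↑(E.pathEnds (M + m) v) ∧
      Set.SurjOn E.next^[m] ↑(E.pathEnds M v) ↑(E.pathEnds (M + m) v) := by
    intro m
    induction m with
    | zero => exact ⟨Set.mapsTo_id _, Set.surjOn_id _⟩
    | succ m ih =>
      obtain ⟨h₁, h₂⟩ := mapsTo_surjOn_next hv (hout (M + m) (by omega))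
      rw [iterate_succ']
      exact ⟨h₁.comp ih.1, h₂.comp ih.2⟩
  obtain ⟨hmaps, hsurj⟩ := pathEnds_add_eq hM ▸ hiter n
  have hbij := ((E.pathEnds M v).finite_toSet.surjOn_iff_bijOn_of_mapsTo hmaps).1 hsurj
  obtain ⟨k, hk, hper⟩ := mem_periodicPts.1 (hbij.bijective.injective.mem_periodicPts ⟨w, hw⟩)
  refine onCycleWithoutExit_of_isPeriodicPt (Nat.mul_pos hn hk) ?_
    fun i => hout (M + i) (by omega) _ ((hiter i).1 hw)
  have h := congrArg Subtype.val hper.eq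
  rwa [Set.MapsTo.iterate_restrict, Set.MapsTo.val_restrict_apply, ← iterate_mul] at h

theorem exists_cycles_of_mem_periodicPts (h : E.tv v ∈ periodicPts (E.shiftT 1)) :
    ∃ W : Set E.V, W.Finite ∧ (∀ u ∈ W, E.OnCycleWithoutExit u) ∧ v ∈ E.satClosure W := by
  have hv := treeRegular_of_mem_periodicPts h
  obtain ⟨n, hn, hper⟩ := mem_periodicPts.1 h
  obtain ⟨M, hM⟩ := exists_pathSum_add_eq hv hper
  exact ⟨_, (E.pathEnds M v).finite_toSet,
    fun w hw => onCycleWithoutExit_of_mem_pathEnds hv hn hM hw, mem_satClosure_pathEnds hv M⟩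

end Forward

end DGraph

/-- `[v]` is a periodic element of the talented monoid `M_E^Γ` iff
`v` lies in the saturated closure of a finite set of vertices lying on cycles
without exits. -/
theorem tv_periodic_iff (E : DGraph) (v : E.V) :
    E.TPeriodic (E.tv v) ↔
      ∃ W : Set E.V, W.Finite ∧
        (∀ u ∈ W, ∃ u₀ es, E.IsCycle u₀ es ∧ ¬ E.HasExit u₀ es ∧
          u ∈ E.walkVerts u₀ es) ∧
        v ∈ E.satClosure W := by
  rw [DGraph.tPeriodic_iff_mem_periodicPts]
  constructor
  · exact fun h => DGraph.exists_cycles_of_mem_periodicPts h.2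
  · rintro ⟨W, -, hW, hv⟩
    exact ⟨E.tv_ne_zero v, DGraph.tv_mem_periodicPts_of_mem_satClosure hW hv⟩
end
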